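/- arXiv:1404.6665 — 7 statements merged into one kernel-verified Lean document; each statement's English description precedes it below -/
import Mathlib

section
/- For d ≥ 2 and r ∈ [0,∞), the function g(r) = σ_{d-1} ∫_0^π (cos θ · sin^{d-2} θ)/(r² + 1 − 2r cos θ)^{(d−2+α)/2} dθ can be rewritten, via integration by parts, as g(r) = σ_{d-1} · r · ((d−2+α)/(d−1)) · ∫_0^π sin^d θ / (r² + 1 − 2r cos θ)^{(d+α)/2} dθ. -/
/-!
Write `w = r² + 1 - 2 r cos θ` and `k = d - 2`. The function `F = sin^{k+1} θ / w^{(k+α)/2}`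
vanishes at `0` and `π` and has derivative `(k+1) L - r (k+α) R`, where `L` and `R` are the two
integrands, so the fundamental theorem of calculus gives the identity as soon as `F` is continuous
on `[0, π]` and `L`, `R` are integrable. For `r ≠ 1` this is clear since `w > 0`. For `r = 1` one
has `w = (2 sin (θ/2))²`, so `L` and `R` are `θ^{-α}` times continuous functions equal to `1` at
`0`, and `F` is `θ^{1-α}` times such a function. If `α < 1` this gives the continuity and
integrability; if `α ≥ 1` neither integral converges, and both sides are `0` by the Bochner
convention.
-/

open Real intervalIntegral MeasureTheory Set Filter Topology

theorem integrableOn_Ioc_mul_rpow_iff {g : ℝ → ℝ} {t : ℝ} (s : ℝ) (ht : 0 < t)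
    (hg : ContinuousOn g (Icc 0 t)) (hg0 : g 0 ≠ 0) :
    IntegrableOn (fun x => g x * x ^ s) (Ioc 0 t) ↔ -1 < s := by
  constructor
  · intro h
    have hne : ∀ᶠ x in 𝓝[≥] (0 : ℝ), g x ≠ 0 := by
      rw [← nhdsWithin_Icc_eq_nhdsGE ht]
      exact (hg 0 ⟨le_rfl, ht.le⟩).eventually_ne hg0
    obtain ⟨u, hu, hsub⟩ := mem_nhdsGE_iff_exists_Icc_subset.mp hne
    set δ := min u t
    have hδ : 0 < δ := lt_min hu ht
    have hgδ : IntegrableOn (fun x => g x * x ^ s) (Icc 0 δ) :=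
      (integrableOn_Icc_iff_integrableOn_Ioc).mpr
        (h.mono_set (Ioc_subset_Ioc_right (min_le_right u t)))
    have hinv : ContinuousOn (fun x => (g x)⁻¹) (Icc 0 δ) :=
      (hg.mono (Icc_subset_Icc_right (min_le_right u t))).inv₀
        fun x hx => hsub (Icc_subset_Icc_right (min_le_left u t) hx)
    have hpow : IntegrableOn (fun x : ℝ => x ^ s) (Icc 0 δ) := by
      refine (hgδ.continuousOn_mul hinv isCompact_Icc).congr_fun (fun x hx => ?_) measurableSet_Icc
      exact inv_mul_cancel_left₀ (hsub (Icc_subset_Icc_right (min_le_left u t) hx)) _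
    exact (integrableOn_Ioo_rpow_iff hδ).mp (hpow.mono_set Ioo_subset_Icc_self)
  · intro hs
    have hpow : IntegrableOn (fun x : ℝ => x ^ s) (Icc 0 t) :=
      (integrableOn_Icc_iff_integrableOn_Ioc).mpr
        ((intervalIntegrable_iff_integrableOn_Ioc_of_le ht.le).mp (intervalIntegrable_rpow' hs))
    exact (hpow.continuousOn_mul hg isCompact_Icc).mono_set Ioc_subset_Icc_self

theorem cos_lt_one_of_mem_Ioc {θ : ℝ} (hθ : θ ∈ Ioc 0 π) : cos θ < 1 := by
  simpa using cos_lt_cos_of_nonneg_of_le_pi le_rfl hθ.2 hθ.1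

theorem sinc_pos {x : ℝ} (hx : |x| < π) : 0 < sinc x := by
  rcases lt_trichotomy x 0 with hneg | rfl | hpos
  · rw [← sinc_neg, sinc_of_ne_zero (neg_ne_zero.mpr hneg.ne)]
    exact div_pos (sin_pos_of_pos_of_lt_pi (neg_pos.mpr hneg) (by rwa [abs_of_neg hneg] at hx))
      (neg_pos.mpr hneg)
  · simp
  · rw [sinc_of_ne_zero hpos.ne']
    exact div_pos (sin_pos_of_pos_of_lt_pi hpos (by rwa [abs_of_pos hpos] at hx)) hpos

theorem sq_add_one_sub_two_mul_cos_pos_of_ne_one {r : ℝ} (hr : 0 ≤ r) (hr1 : r ≠ 1) (θ : ℝ) :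
    0 < r ^ 2 + 1 - 2 * r * cos θ := by
  have h : 0 < (r - 1) ^ 2 := by positivity [sub_ne_zero.mpr hr1]
  nlinarith [mul_nonneg hr (sub_nonneg.mpr (cos_le_one θ))]

theorem sq_add_one_sub_two_mul_cos_pos_of_cos_lt_one {r θ : ℝ} (hr : 0 ≤ r) (hθ : cos θ < 1) :
    0 < r ^ 2 + 1 - 2 * r * cos θ := by
  nlinarith [sq_nonneg (r - 1), mul_nonneg hr (sub_nonneg.mpr hθ.le)]

theorem hasDerivAt_sin_pow_succ_div_rpow (k : ℕ) (α r : ℝ) {θ : ℝ}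
    (hw : 0 < r ^ 2 + 1 - 2 * r * cos θ) :
    HasDerivAt (fun θ => sin θ ^ (k + 1) / (r ^ 2 + 1 - 2 * r * cos θ) ^ (((k : ℝ) + α) / 2))
      (((k : ℝ) + 1) * (cos θ * sin θ ^ k / (r ^ 2 + 1 - 2 * r * cos θ) ^ (((k : ℝ) + α) / 2))
        - r * ((k : ℝ) + α) *
          (sin θ ^ (k + 2) / (r ^ 2 + 1 - 2 * r * cos θ) ^ (((k : ℝ) + 2 + α) / 2))) θ := by
  have hdw : HasDerivAt (fun θ => r ^ 2 + 1 - 2 * r * cos θ) (2 * r * sin θ) θ := by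
    simpa using ((hasDerivAt_cos θ).const_mul (2 * r)).const_sub (r ^ 2 + 1)
  refine (((hasDerivAt_sin θ).pow (k + 1)).div (hdw.rpow_const (p := ((k : ℝ) + α) / 2)
    (Or.inl hw.ne')) (rpow_pos_of_pos hw _).ne').congr_deriv ?_
  rw [show ((k : ℝ) + 2 + α) / 2 = ((k : ℝ) + α) / 2 + 1 by ring, rpow_add_one hw.ne',
    rpow_sub_one hw.ne']
  simp only [Pi.pow_apply]
  generalize r ^ 2 + 1 - 2 * r * cos θ = w at hw ⊢
  have := rpow_pos_of_pos hw (((k : ℝ) + α) / 2)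
  field_simp
  push_cast
  ring

theorem integral_cos_mul_sin_pow_div_rpow_of_continuousOn (k : ℕ) (α : ℝ) {r : ℝ} (hr : 0 ≤ r)
    (hF : ContinuousOn
      (fun θ => sin θ ^ (k + 1) / (r ^ 2 + 1 - 2 * r * cos θ) ^ (((k : ℝ) + α) / 2)) (Icc 0 π))
    (hL : IntervalIntegrable
      (fun θ => cos θ * sin θ ^ k / (r ^ 2 + 1 - 2 * r * cos θ) ^ (((k : ℝ) + α) / 2)) volume 0 π)
    (hR : IntervalIntegrable
      (fun θ => sin θ ^ (k + 2) / (r ^ 2 + 1 - 2 * r * cos θ) ^ (((k : ℝ) + 2 + α) / 2))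
      volume 0 π) :
    ∫ θ in (0 : ℝ)..π, cos θ * sin θ ^ k / (r ^ 2 + 1 - 2 * r * cos θ) ^ (((k : ℝ) + α) / 2)
      = r * ((k : ℝ) + α) / ((k : ℝ) + 1) *
        ∫ θ in (0 : ℝ)..π,
          sin θ ^ (k + 2) / (r ^ 2 + 1 - 2 * r * cos θ) ^ (((k : ℝ) + 2 + α) / 2) := by
  have hFTC := integral_eq_sub_of_hasDerivAt_of_le pi_pos.le hF
    (fun θ hθ => hasDerivAt_sin_pow_succ_div_rpow k α r
      (sq_add_one_sub_two_mul_cos_pos_of_cos_lt_one hr (cos_lt_one_of_mem_Ioc ⟨hθ.1, hθ.2.le⟩)))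
    ((hL.const_mul _).sub (hR.const_mul _))
  rw [integral_sub (hL.const_mul _) (hR.const_mul _), intervalIntegral.integral_const_mul,
    intervalIntegral.integral_const_mul, sin_pi, sin_zero, zero_pow k.succ_ne_zero, zero_div,
    zero_div, sub_zero, sub_eq_zero] at hFTC
  rw [div_mul_eq_mul_div, eq_div_iff (by positivity), ← hFTC, mul_comm]

theorem sin_pow_div_two_sub_two_cos_rpow {θ : ℝ} (hθ : θ ∈ Ioc 0 π) (m : ℕ) (β : ℝ) :
    sin θ ^ m / (2 - 2 * cos θ) ^ (((m : ℝ) + β) / 2)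
      = cos (θ / 2) ^ m * sinc (θ / 2) ^ (-β) * θ ^ (-β) := by
  have hy : 0 < 2 * sin (θ / 2) :=
    mul_pos two_pos (sin_pos_of_pos_of_lt_pi (by linarith [hθ.1]) (by linarith [hθ.2, pi_pos]))
  have hsin : sin θ = 2 * sin (θ / 2) * cos (θ / 2) := by
    rw [← sin_two_mul]
    ring_nf
  have hcos : 2 - 2 * cos θ = (2 * sin (θ / 2)) ^ 2 := by
    have : cos θ = 2 * cos (θ / 2) ^ 2 - 1 := by
      rw [← cos_two_mul]
      ring_nf
    linear_combination -2 * this - 4 * sin_sq_add_cos_sq (θ / 2)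
  have hsinc : sinc (θ / 2) * θ = 2 * sin (θ / 2) := by
    have : θ ≠ 0 := hθ.1.ne'
    rw [sinc_of_ne_zero (by positivity)]
    field_simp
  rw [mul_assoc, ← mul_rpow (sinc_pos (by rw [abs_lt]; constructor <;> linarith [hθ.1, hθ.2])).le
    hθ.1.le, hsinc, hsin, hcos, ← rpow_natCast _ 2, ← rpow_mul hy.le,
    show ((2 : ℕ) : ℝ) * (((m : ℝ) + β) / 2) = m + β by push_cast; ring, rpow_add hy,
    rpow_natCast, rpow_neg hy.le, mul_pow]
  field_simp

theorem continuousOn_cos_half_pow_mul_sinc_half_rpow (m : ℕ) (β : ℝ) :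
    ContinuousOn (fun θ => cos (θ / 2) ^ m * sinc (θ / 2) ^ β) (Icc 0 π) := by
  refine (by fun_prop : Continuous fun θ => cos (θ / 2) ^ m).continuousOn.mul
    ((by fun_prop : Continuous fun θ : ℝ => sinc (θ / 2)).continuousOn.rpow_const
      fun θ hθ => Or.inl (sinc_pos ?_).ne')
  rw [abs_lt]
  constructor <;> linarith [hθ.1, hθ.2, pi_pos]

theorem intervalIntegrable_mul_sin_pow_div_two_sub_two_cos_rpow_iff {g : ℝ → ℝ}
    (hg : ContinuousOn g (Icc 0 π)) (hg0 : g 0 ≠ 0) (m : ℕ) (α : ℝ) :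
    IntervalIntegrable (fun θ => g θ * sin θ ^ m / (2 - 2 * cos θ) ^ (((m : ℝ) + α) / 2))
      volume 0 π ↔ α < 1 := by
  rw [intervalIntegrable_iff_integrableOn_Ioc_of_le pi_pos.le,
    integrableOn_congr_fun (fun θ hθ => by
      rw [mul_div_assoc, sin_pow_div_two_sub_two_cos_rpow hθ, ← mul_assoc, ← mul_assoc])
      measurableSet_Ioc,
    integrableOn_Ioc_mul_rpow_iff (-α) pi_pos
      ((hg.mul (continuousOn_cos_half_pow_mul_sinc_half_rpow m (-α))).congr
        fun _ _ => mul_assoc _ _ _)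
      (by simpa using hg0),
    neg_lt_neg_iff]

theorem continuousOn_sin_pow_succ_div_two_sub_two_cos_rpow (k : ℕ) {α : ℝ} (hα : α < 1) :
    ContinuousOn (fun θ => sin θ ^ (k + 1) / (2 - 2 * cos θ) ^ (((k : ℝ) + α) / 2))
      (Icc 0 π) := by
  refine ((continuousOn_cos_half_pow_mul_sinc_half_rpow (k + 1) (1 - α)).mul
    (continuousOn_id.rpow_const (p := 1 - α) fun _ _ => Or.inr (by linarith))).congr fun θ hθ => ?_
  rcases hθ.1.eq_or_lt with rfl | hpos
  · simp [zero_rpow (by linarith : (1 : ℝ) - α ≠ 0)]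
  · have := sin_pow_div_two_sub_two_cos_rpow ⟨hpos, hθ.2⟩ (k + 1) (α - 1)
    rwa [show ((k + 1 : ℕ) : ℝ) + (α - 1) = k + α by push_cast; ring, neg_sub] at this

theorem integral_cos_mul_sin_pow_div_rpow (k : ℕ) (α : ℝ) {r : ℝ} (hr : 0 ≤ r) :
    ∫ θ in (0 : ℝ)..π, cos θ * sin θ ^ k / (r ^ 2 + 1 - 2 * r * cos θ) ^ (((k : ℝ) + α) / 2)
      = r * ((k : ℝ) + α) / ((k : ℝ) + 1) *
        ∫ θ in (0 : ℝ)..π,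
          sin θ ^ (k + 2) / (r ^ 2 + 1 - 2 * r * cos θ) ^ (((k : ℝ) + 2 + α) / 2) := by
  rcases eq_or_ne r 1 with rfl | hr1
  · have hbase (θ : ℝ) : (1 : ℝ) ^ 2 + 1 - 2 * 1 * cos θ = 2 - 2 * cos θ := by ring
    have hL := intervalIntegrable_mul_sin_pow_div_two_sub_two_cos_rpow_iff
      continuous_cos.continuousOn (by simp) k α
    have hR := intervalIntegrable_mul_sin_pow_div_two_sub_two_cos_rpow_iff
      continuousOn_const one_ne_zero (k + 2) α
    simp only [one_mul, Nat.cast_add, Nat.cast_ofNat] at hR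
    rcases lt_or_ge α 1 with hα | hα
    · apply integral_cos_mul_sin_pow_div_rpow_of_continuousOn k α zero_le_one <;>
        simp only [hbase]
      exacts [continuousOn_sin_pow_succ_div_two_sub_two_cos_rpow k hα, hL.mpr hα, hR.mpr hα]
    · simp only [hbase]
      rw [integral_undef (mt hL.mp hα.not_gt), integral_undef (mt hR.mp hα.not_gt), mul_zero]
  · have hw := sq_add_one_sub_two_mul_cos_pos_of_ne_one hr hr1
    have hcont {f : ℝ → ℝ} (hf : Continuous f) (p : ℝ) :
        Continuous fun θ => f θ / (r ^ 2 + 1 - 2 * r * cos θ) ^ p :=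
      hf.div ((by fun_prop : Continuous fun θ => r ^ 2 + 1 - 2 * r * cos θ).rpow_const
        fun θ => Or.inl (hw θ).ne') fun θ => (rpow_pos_of_pos (hw θ) p).ne'
    exact integral_cos_mul_sin_pow_div_rpow_of_continuousOn k α hr
      (hcont (by fun_prop) _).continuousOn ((hcont (by fun_prop) _).intervalIntegrable _ _)
      ((hcont (by fun_prop) _).intervalIntegrable _ _)

theorem stmt_0_general (d : ℕ) (hd : 2 ≤ d) (α : ℝ) (σ : ℝ) (r : ℝ) (hr : 0 ≤ r) :
    σ * ∫ θ in (0:ℝ)..π,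
        Real.cos θ * Real.sin θ ^ (d - 2) / (r ^ 2 + 1 - 2 * r * Real.cos θ) ^ (((d : ℝ) - 2 + α) / 2)
    = σ * r * (((d : ℝ) - 2 + α) / ((d : ℝ) - 1)) *
      ∫ θ in (0:ℝ)..π,
        Real.sin θ ^ d / (r ^ 2 + 1 - 2 * r * Real.cos θ) ^ (((d : ℝ) + α) / 2) := by
  obtain ⟨k, rfl⟩ := Nat.exists_eq_add_of_le' hd
  have hexp : ((k + 2 : ℕ) : ℝ) - 2 + α = k + α := by push_cast; ring
  have hexp' : ((k + 2 : ℕ) : ℝ) + α = k + 2 + α := by push_cast; ring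
  have hden : ((k + 2 : ℕ) : ℝ) - 1 = k + 1 := by push_cast; ring
  rw [Nat.add_sub_cancel, hexp, hexp', hden, integral_cos_mul_sin_pow_div_rpow k α hr]
  ring

/-- Integration by parts form of the kernel `g` (d ≥ 2). -/
theorem stmt_0 (d : ℕ) (hd : 2 ≤ d) (α : ℝ) (σ : ℝ) (hσ : 0 < σ) (r : ℝ) (hr : 0 ≤ r) :
    σ * ∫ θ in (0:ℝ)..π,
        Real.cos θ * Real.sin θ ^ (d - 2) / (r ^ 2 + 1 - 2 * r * Real.cos θ) ^ (((d : ℝ) - 2 + α) / 2)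
    = σ * r * (((d : ℝ) - 2 + α) / ((d : ℝ) - 1)) *
      ∫ θ in (0:ℝ)..π,
        Real.sin θ ^ d / (r ^ 2 + 1 - 2 * r * Real.cos θ) ^ (((d : ℝ) + α) / 2) :=
  stmt_0_general d hd α σ r hr
end

section
/- For d ≥ 2, 0 ≤ r < 1, and f(r) := ∫_0^π sin^d θ / (r² + 1 − 2r cos θ)^{d/2} dθ, one has f(r) = ∫_0^π sin^d θ dθ, i.e., f is constant on [0,1). -/
open Real intervalIntegral

noncomputable def auxF (d : ℕ) (r : ℝ) : ℝ → ℝ :=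
  fun θ => Real.sin θ ^ d / (r ^ 2 + 1 - 2 * r * Real.cos θ) ^ ((d : ℝ) / 2)

noncomputable def auxg (r : ℝ) : ℝ → ℝ :=
  fun γ => π - γ - Real.arcsin (r * Real.sin γ)

noncomputable def auxg' (r : ℝ) : ℝ → ℝ :=
  fun γ => -1 - 1 / Real.sqrt (1 - (r * Real.sin γ) ^ 2) * (r * Real.cos γ)

lemma aux_sq_lt (r : ℝ) (hr0 : 0 ≤ r) (hr1 : r < 1) (γ : ℝ) :
    (r * Real.sin γ) ^ 2 < 1 := by
  have h1 : r ^ 2 < 1 := by nlinarith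
  have h2 : Real.sin γ ^ 2 ≤ 1 := Real.sin_sq_le_one γ
  have h3 : r ^ 2 * Real.sin γ ^ 2 ≤ r ^ 2 * 1 :=
    mul_le_mul_of_nonneg_left h2 (sq_nonneg r)
  nlinarith

lemma aux_q_pos (r : ℝ) (hr0 : 0 ≤ r) (hr1 : r < 1) (γ : ℝ) :
    0 < Real.sqrt (1 - (r * Real.sin γ) ^ 2) :=
  Real.sqrt_pos.mpr (by nlinarith [aux_sq_lt r hr0 hr1 γ])

lemma aux_W_pos (r : ℝ) (hr0 : 0 ≤ r) (hr1 : r < 1) (γ : ℝ) :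
    0 < Real.sqrt (1 - (r * Real.sin γ) ^ 2) + r * Real.cos γ := by
  have hq := aux_q_pos r hr0 hr1 γ
  have hqq : (Real.sqrt (1 - (r * Real.sin γ) ^ 2)) ^ 2 = 1 - (r * Real.sin γ) ^ 2 :=
    Real.sq_sqrt (by nlinarith [aux_sq_lt r hr0 hr1 γ])
  have hs2 : Real.sin γ ^ 2 + Real.cos γ ^ 2 = 1 := Real.sin_sq_add_cos_sq γ
  have hr2 : r ^ 2 < 1 := by nlinarith
  set q := Real.sqrt (1 - (r * Real.sin γ) ^ 2)
  have e : q ^ 2 - (r * Real.cos γ) ^ 2 = 1 - r ^ 2 := by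
    linear_combination hqq - r ^ 2 * hs2
  rcases le_or_gt 0 (r * Real.cos γ) with h | h
  · linarith
  · have h1 : (r * Real.cos γ) ^ 2 < q ^ 2 := by nlinarith
    nlinarith

lemma aux_hasDerivAt (r : ℝ) (hr0 : 0 ≤ r) (hr1 : r < 1) (γ : ℝ) :
    HasDerivAt (auxg r) (auxg' r γ) γ := by
  have hlt := aux_sq_lt r hr0 hr1 γ
  have h1 : r * Real.sin γ ≠ -1 := by intro h; rw [h] at hlt; norm_num at hlt
  have h2 : r * Real.sin γ ≠ 1 := by intro h; rw [h] at hlt; norm_num at hlt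
  have hinner : HasDerivAt (fun γ : ℝ => r * Real.sin γ) (r * Real.cos γ) γ :=
    (Real.hasDerivAt_sin γ).const_mul r
  have harc := (Real.hasDerivAt_arcsin h1 h2).comp γ hinner
  have hlin : HasDerivAt (fun γ : ℝ => π - γ) (-1) γ := (hasDerivAt_id γ).const_sub π
  exact hlin.sub harc

lemma aux_g'_cont (r : ℝ) (hr0 : 0 ≤ r) (hr1 : r < 1) : Continuous (auxg' r) := by
  unfold auxg'
  apply Continuous.sub continuous_const
  apply Continuous.mul
  · apply Continuous.div continuous_const
    · exact (continuous_const.sub ((continuous_const.mul Real.continuous_sin).pow 2)).sqrt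
    · exact fun γ => (aux_q_pos r hr0 hr1 γ).ne'
  · exact continuous_const.mul Real.continuous_cos

lemma aux_A_pos (r : ℝ) (hr0 : 0 ≤ r) (hr1 : r < 1) (θ : ℝ) :
    0 < r ^ 2 + 1 - 2 * r * Real.cos θ := by
  nlinarith [Real.cos_le_one θ, sq_nonneg (1 - r)]

lemma aux_F_cont (d : ℕ) (r : ℝ) (hr0 : 0 ≤ r) (hr1 : r < 1) : Continuous (auxF d r) := by
  unfold auxF
  apply Continuous.div (Real.continuous_sin.pow d)
  · apply Continuous.rpow_const
    · fun_prop
    · intro x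
      exact Or.inl (aux_A_pos r hr0 hr1 x).ne'
  · intro θ
    exact (Real.rpow_pos_of_pos (aux_A_pos r hr0 hr1 θ) _).ne'

/-- key pointwise identity -/
lemma aux_key (d : ℕ) (r : ℝ) (hr0 : 0 ≤ r) (hr1 : r < 1) (γ : ℝ) :
    -(auxg' r γ * auxF d r (auxg r γ))
      = Real.sin γ ^ d
        + r * Real.sin γ ^ d * Real.cos γ / Real.sqrt (1 - (r * Real.sin γ) ^ 2) := by
  have hlt := aux_sq_lt r hr0 hr1 γ
  have hq := aux_q_pos r hr0 hr1 γ
  have hW := aux_W_pos r hr0 hr1 γ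
  set s := Real.sin γ with hs
  set c := Real.cos γ with hc
  set q := Real.sqrt (1 - (r * s) ^ 2) with hqdef
  have hqq : q ^ 2 = 1 - (r * s) ^ 2 := Real.sq_sqrt (by nlinarith)
  have hs2 : s ^ 2 + c ^ 2 = 1 := Real.sin_sq_add_cos_sq γ
  have hrs1 : -1 ≤ r * s := by nlinarith [sq_nonneg (r * s + 1)]
  have hrs2 : r * s ≤ 1 := by nlinarith [sq_nonneg (r * s - 1)]
  have hsin : Real.sin (auxg r γ) = s * (q + r * c) := by
    unfold auxg
    rw [show π - γ - Real.arcsin (r * s) = π - (γ + Real.arcsin (r * s)) by ring,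
      Real.sin_pi_sub, Real.sin_add, Real.sin_arcsin hrs1 hrs2, Real.cos_arcsin]
    rw [← hs, ← hc, ← hqdef]
    ring
  have hcos : Real.cos (auxg r γ) = r * s ^ 2 - c * q := by
    unfold auxg
    rw [show π - γ - Real.arcsin (r * s) = π - (γ + Real.arcsin (r * s)) by ring,
      Real.cos_pi_sub, Real.cos_add, Real.sin_arcsin hrs1 hrs2, Real.cos_arcsin]
    rw [← hs, ← hc, ← hqdef]
    ring
  have hA : r ^ 2 + 1 - 2 * r * Real.cos (auxg r γ) = (q + r * c) ^ 2 := by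
    rw [hcos]; nlinarith [hqq, hs2]
  have hpow : ((q + r * c) ^ 2 : ℝ) ^ ((d : ℝ) / 2) = (q + r * c) ^ d := by
    rw [← Real.rpow_natCast (q + r * c) 2, ← Real.rpow_mul hW.le,
      show ((2 : ℕ) : ℝ) * ((d : ℝ) / 2) = (d : ℝ) by push_cast; ring]
    exact Real.rpow_natCast _ d
  unfold auxF auxg'
  rw [← hs, ← hc, ← hqdef, hsin, hA, hpow, mul_pow]
  have hWd : (q + r * c) ^ d ≠ 0 := pow_ne_zero d hW.ne'
  field_simp
  ring

lemma aux_odd_zero (d : ℕ) (r : ℝ) :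
    (∫ x in (0:ℝ)..π,
      r * Real.sin x ^ d * Real.cos x / Real.sqrt (1 - (r * Real.sin x) ^ 2)) = 0 := by
  set G : ℝ → ℝ :=
    fun x => r * Real.sin x ^ d * Real.cos x / Real.sqrt (1 - (r * Real.sin x) ^ 2) with hG
  have hodd : ∀ x, G (π - x) = -G x := by
    intro x
    simp only [hG, Real.sin_pi_sub, Real.cos_pi_sub]
    ring
  have h1 : (∫ x in (0:ℝ)..π, G (π - x)) = ∫ x in (0:ℝ)..π, G x := by
    rw [intervalIntegral.integral_comp_sub_left G π]
    norm_num
  have h2 : (∫ x in (0:ℝ)..π, G (π - x)) = ∫ x in (0:ℝ)..π, -G x := by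
    simp only [hodd]
  rw [h2, intervalIntegral.integral_neg] at h1
  linarith

/-- The α = 0 case: f(r,d,0) is constant on [0,1). -/
theorem stmt_1 (d : ℕ) (hd : 2 ≤ d) (r : ℝ) (hr0 : 0 ≤ r) (hr1 : r < 1) :
    ∫ θ in (0:ℝ)..π,
        Real.sin θ ^ d / (r ^ 2 + 1 - 2 * r * Real.cos θ) ^ ((d : ℝ) / 2)
    = ∫ θ in (0:ℝ)..π, Real.sin θ ^ d := by
  have hFc := aux_F_cont d r hr0 hr1
  have cov := intervalIntegral.integral_comp_smul_deriv
    (f := auxg r) (f' := auxg' r) (g := auxF d r) (a := 0) (b := π)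
    (fun x _ => aux_hasDerivAt r hr0 hr1 x) (aux_g'_cont r hr0 hr1).continuousOn hFc
  have hg0 : auxg r 0 = π := by simp [auxg]
  have hgπ : auxg r π = 0 := by simp [auxg]
  rw [hg0, hgπ] at cov
  have c2 : (∫ x in (0:ℝ)..π, auxg' r x * auxF d r (auxg r x))
      = ∫ x in π..(0:ℝ), auxF d r x := by
    rw [← cov]
    simp [smul_eq_mul, Function.comp]
  have hmain : (∫ θ in (0:ℝ)..π, auxF d r θ)
      = ∫ γ in (0:ℝ)..π, -(auxg' r γ * auxF d r (auxg r γ)) := by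
    rw [intervalIntegral.integral_neg, c2, intervalIntegral.integral_symm 0 π, neg_neg]
  have hcongr : (∫ γ in (0:ℝ)..π, -(auxg' r γ * auxF d r (auxg r γ)))
      = ∫ γ in (0:ℝ)..π,
          (Real.sin γ ^ d
            + r * Real.sin γ ^ d * Real.cos γ / Real.sqrt (1 - (r * Real.sin γ) ^ 2)) := by
    apply intervalIntegral.integral_congr
    intro γ _
    exact aux_key d r hr0 hr1 γ
  have hint1 : IntervalIntegrable (fun γ : ℝ => Real.sin γ ^ d) MeasureTheory.volume 0 π :=
    (Real.continuous_sin.pow d).intervalIntegrable 0 π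
  have hint2 : IntervalIntegrable
      (fun γ : ℝ => r * Real.sin γ ^ d * Real.cos γ / Real.sqrt (1 - (r * Real.sin γ) ^ 2))
      MeasureTheory.volume 0 π := by
    apply Continuous.intervalIntegrable
    apply Continuous.div
    · exact ((continuous_const.mul (Real.continuous_sin.pow d)).mul Real.continuous_cos)
    · exact (continuous_const.sub ((continuous_const.mul Real.continuous_sin).pow 2)).sqrt
    · exact fun γ => (aux_q_pos r hr0 hr1 γ).ne'
  have hsplit : (∫ γ in (0:ℝ)..π,
      (Real.sin γ ^ d
        + r * Real.sin γ ^ d * Real.cos γ / Real.sqrt (1 - (r * Real.sin γ) ^ 2)))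
      = (∫ γ in (0:ℝ)..π, Real.sin γ ^ d)
        + ∫ γ in (0:ℝ)..π,
            r * Real.sin γ ^ d * Real.cos γ / Real.sqrt (1 - (r * Real.sin γ) ^ 2) :=
    intervalIntegral.integral_add hint1 hint2
  calc ∫ θ in (0:ℝ)..π, Real.sin θ ^ d / (r ^ 2 + 1 - 2 * r * Real.cos θ) ^ ((d : ℝ) / 2)
      = ∫ θ in (0:ℝ)..π, auxF d r θ := rfl
    _ = ∫ γ in (0:ℝ)..π, -(auxg' r γ * auxF d r (auxg r γ)) := hmain
    _ = ∫ γ in (0:ℝ)..π,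
          (Real.sin γ ^ d
            + r * Real.sin γ ^ d * Real.cos γ / Real.sqrt (1 - (r * Real.sin γ) ^ 2)) := hcongr
    _ = (∫ γ in (0:ℝ)..π, Real.sin γ ^ d)
        + ∫ γ in (0:ℝ)..π,
            r * Real.sin γ ^ d * Real.cos γ / Real.sqrt (1 - (r * Real.sin γ) ^ 2) := hsplit
    _ = ∫ θ in (0:ℝ)..π, Real.sin θ ^ d := by
          rw [aux_odd_zero d r, add_zero]
end

section
/- Let d ≥ 2, α ∈ ℝ, and for r ∈ (−1,1) define f(r, d, α) = ∫_0^π sin^d θ / (r² + 1 − 2r cos θ)^{(d+α)/2} dθ. Then ∂²_r f(r, d, α) = (d+α)[(d+α+1) f(r, d, α+2) − (d+α+2) f(r, d+2, α+2)]. -/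
open Real intervalIntegral Set Function Metric Filter Topology
open scoped Interval

/-!
Differentiate twice under the integral sign. For the kernel `ρ = s² + 1 - 2 s cos θ`, positive when
`|s| < 1`, we have `∂ₛρ = 2 (s - cos θ)`, so the second derivative of `∫ w ρ^p` is
`∫ w p (2 ρ^(p-1) + 4 (p-1) (s - cos θ)² ρ^(p-2))`. Since `(s - cos θ)² = ρ - sin² θ`, this is
`2p(2p-1) ∫ w ρ^(p-1) - 4p(p-1) ∫ w sin² θ ρ^(p-2)`; the theorem is the case `w = sinᵈ`,
`p = -(d+α)/2`.
-/

theorem hasDerivAt_intervalIntegral_of_continuousOn {E : Type*} [NormedAddCommGroup E]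
    [NormedSpace ℝ E] {F F' : ℝ → ℝ → E} {U : Set ℝ} {a b x₀ : ℝ}
    (hU : IsOpen U) (hx₀ : x₀ ∈ U)
    (hF : ContinuousOn (uncurry F) (U ×ˢ [[a, b]]))
    (hF' : ContinuousOn (uncurry F') (U ×ˢ [[a, b]]))
    (hFF' : ∀ x ∈ U, ∀ t ∈ [[a, b]], HasDerivAt (F · t) (F' x t) x) :
    HasDerivAt (fun x => ∫ t in a..b, F x t) (∫ t in a..b, F' x₀ t) x₀ := by
  obtain ⟨ε, hε, hεU⟩ := nhds_basis_closedBall.mem_iff.mp (hU.mem_nhds hx₀)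
  -- a bound for `F'` on the compact set `closedBall x₀ ε ×ˢ [[a, b]]` dominates the derivatives
  obtain ⟨C, hC⟩ :=
    ((isCompact_closedBall x₀ ε).prod isCompact_uIcc).exists_bound_of_continuousOn
      (hF'.mono (prod_mono hεU le_rfl))
  have slice : ∀ {G : ℝ → ℝ → E}, ContinuousOn (uncurry G) (U ×ˢ [[a, b]]) →
      ∀ x ∈ U, ContinuousOn (G x) [[a, b]] := fun hG x hx =>
    hG.comp (Continuous.prodMk_right x).continuousOn fun _ ht => ⟨hx, ht⟩
  have hball : ball x₀ ε ⊆ U := ball_subset_closedBall.trans hεU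
  refine (hasDerivAt_integral_of_dominated_loc_of_deriv_le (bound := fun _ => C)
    (ball_mem_nhds x₀ hε) ?_ ((slice hF x₀ hx₀).intervalIntegrable)
    (((slice hF' x₀ hx₀).mono uIoc_subset_uIcc).aestronglyMeasurable measurableSet_uIoc)
    (.of_forall fun t ht x hx => hC (x, t) ⟨ball_subset_closedBall hx, uIoc_subset_uIcc ht⟩)
    intervalIntegrable_const
    (.of_forall fun t ht x hx => hFF' x (hball hx) t (uIoc_subset_uIcc ht))).2
  filter_upwards [hU.mem_nhds hx₀] with x hx
  exact ((slice hF x hx).mono uIoc_subset_uIcc).aestronglyMeasurable measurableSet_uIoc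

lemma sq_add_one_sub_two_mul_mul_cos_pos {s : ℝ} (hs : s ∈ Ioo (-1 : ℝ) 1) (θ : ℝ) :
    0 < s ^ 2 + 1 - 2 * s * cos θ := by
  obtain ⟨h1, h2⟩ := hs
  -- `2 (s² + 1 - 2 s cos θ) = (1 - s)² (1 + cos θ) + (1 + s)² (1 - cos θ)`
  nlinarith [neg_one_le_cos θ, cos_le_one θ, mul_pos (sub_pos.2 h2) (neg_lt_iff_pos_add.1 h1),
    mul_nonneg (sq_nonneg (1 - s)) (by linarith [neg_one_le_cos θ] : 0 ≤ 1 + cos θ),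
    mul_nonneg (sq_nonneg (1 + s)) (by linarith [cos_le_one θ] : 0 ≤ 1 - cos θ)]

lemma continuousOn_kernel_rpow (p : ℝ) :
    ContinuousOn (fun x : ℝ × ℝ => (x.1 ^ 2 + 1 - 2 * x.1 * cos x.2) ^ p)
      (Ioo (-1) 1 ×ˢ univ) :=
  ContinuousOn.rpow_const (by fun_prop) fun x hx =>
    .inl (sq_add_one_sub_two_mul_mul_cos_pos hx.1 x.2).ne'

lemma continuous_kernel_rpow {s : ℝ} (hs : s ∈ Ioo (-1 : ℝ) 1) (p : ℝ) :
    Continuous fun θ => (s ^ 2 + 1 - 2 * s * cos θ) ^ p :=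
  Continuous.rpow_const (by fun_prop) fun θ =>
    .inl (sq_add_one_sub_two_mul_mul_cos_pos hs θ).ne'

lemma hasDerivAt_kernel_rpow (θ p : ℝ) {s : ℝ} (hs : s ∈ Ioo (-1 : ℝ) 1) :
    HasDerivAt (fun s => (s ^ 2 + 1 - 2 * s * cos θ) ^ p)
      ((2 * s - 2 * cos θ) * p * (s ^ 2 + 1 - 2 * s * cos θ) ^ (p - 1)) s := by
  have hρ : HasDerivAt (fun s : ℝ => s ^ 2 + 1 - 2 * s * cos θ) (2 * s - 2 * cos θ) s :=
    (((hasDerivAt_pow 2 s).add_const 1).fun_sub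
      (((hasDerivAt_id s).const_mul 2).mul_const (cos θ))).congr_deriv (by norm_num)
  exact hρ.rpow_const (.inl (sq_add_one_sub_two_mul_mul_cos_pos hs θ).ne')

lemma hasDerivAt_deriv_kernel_rpow (θ p : ℝ) {s : ℝ} (hs : s ∈ Ioo (-1 : ℝ) 1) :
    HasDerivAt (fun s => (2 * s - 2 * cos θ) * p * (s ^ 2 + 1 - 2 * s * cos θ) ^ (p - 1))
      (2 * p * (s ^ 2 + 1 - 2 * s * cos θ) ^ (p - 1) + (2 * s - 2 * cos θ) * p *
        ((2 * s - 2 * cos θ) * (p - 1) * (s ^ 2 + 1 - 2 * s * cos θ) ^ (p - 1 - 1))) s := by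
  simpa using ((((hasDerivAt_id s).const_mul 2).sub_const (2 * cos θ)).mul_const p).fun_mul
    (hasDerivAt_kernel_rpow θ (p - 1) hs)

lemma integral_div_kernel_rpow_neg (w : ℝ → ℝ) (a b p : ℝ) {s : ℝ}
    (hs : s ∈ Ioo (-1 : ℝ) 1) :
    ∫ θ in a..b, w θ / (s ^ 2 + 1 - 2 * s * cos θ) ^ (-p) =
      ∫ θ in a..b, w θ * (s ^ 2 + 1 - 2 * s * cos θ) ^ p :=
  integral_congr fun θ _ => by
    rw [rpow_neg (sq_add_one_sub_two_mul_mul_cos_pos hs θ).le, div_inv_eq_mul]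

section KernelIntegral

variable {w : ℝ → ℝ} (hw : Continuous w) (a b p : ℝ) {s : ℝ}
include hw

theorem hasDerivAt_integral_mul_kernel_rpow (hs : s ∈ Ioo (-1 : ℝ) 1) :
    HasDerivAt (fun s => ∫ θ in a..b, w θ * (s ^ 2 + 1 - 2 * s * cos θ) ^ p)
      (∫ θ in a..b, w θ * ((2 * s - 2 * cos θ) * p * (s ^ 2 + 1 - 2 * s * cos θ) ^ (p - 1)))
      s := by
  refine hasDerivAt_intervalIntegral_of_continuousOn isOpen_Ioo hs ?_ ?_
    fun x hx θ _ => (hasDerivAt_kernel_rpow θ p hx).const_mul (w θ)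
  all_goals
    refine ContinuousOn.mono ?_ (prod_mono subset_rfl (subset_univ _))
    have := continuousOn_kernel_rpow p
    have := continuousOn_kernel_rpow (p - 1)
    simp only [uncurry_def]
    fun_prop

theorem hasDerivAt_integral_mul_deriv_kernel_rpow (hs : s ∈ Ioo (-1 : ℝ) 1) :
    HasDerivAt
      (fun s => ∫ θ in a..b, w θ *
        ((2 * s - 2 * cos θ) * p * (s ^ 2 + 1 - 2 * s * cos θ) ^ (p - 1)))
      (∫ θ in a..b, w θ * (2 * p * (s ^ 2 + 1 - 2 * s * cos θ) ^ (p - 1) +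
        (2 * s - 2 * cos θ) * p *
          ((2 * s - 2 * cos θ) * (p - 1) * (s ^ 2 + 1 - 2 * s * cos θ) ^ (p - 1 - 1))))
      s := by
  refine hasDerivAt_intervalIntegral_of_continuousOn isOpen_Ioo hs ?_ ?_
    fun x hx θ _ => (hasDerivAt_deriv_kernel_rpow θ p hx).const_mul (w θ)
  all_goals
    refine ContinuousOn.mono ?_ (prod_mono subset_rfl (subset_univ _))
    have := continuousOn_kernel_rpow (p - 1)
    have := continuousOn_kernel_rpow (p - 1 - 1)
    simp only [uncurry_def]
    fun_prop

theorem deriv_deriv_integral_mul_kernel_rpow (hs : s ∈ Ioo (-1 : ℝ) 1) :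
    deriv (deriv fun s => ∫ θ in a..b, w θ * (s ^ 2 + 1 - 2 * s * cos θ) ^ p) s =
      2 * p * (2 * p - 1) * (∫ θ in a..b, w θ * (s ^ 2 + 1 - 2 * s * cos θ) ^ (p - 1)) -
        4 * p * (p - 1) *
          ∫ θ in a..b, w θ * sin θ ^ 2 * (s ^ 2 + 1 - 2 * s * cos θ) ^ (p - 2) := by
  have hderiv :
      deriv (fun s => ∫ θ in a..b, w θ * (s ^ 2 + 1 - 2 * s * cos θ) ^ p) =ᶠ[𝓝 s]
        fun s => ∫ θ in a..b, w θ *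
          ((2 * s - 2 * cos θ) * p * (s ^ 2 + 1 - 2 * s * cos θ) ^ (p - 1)) := by
    filter_upwards [isOpen_Ioo.mem_nhds hs] with x hx
    exact (hasDerivAt_integral_mul_kernel_rpow hw a b p hx).deriv
  have hρ := continuous_kernel_rpow hs
  rw [hderiv.deriv_eq, (hasDerivAt_integral_mul_deriv_kernel_rpow hw a b p hs).deriv,
    ← integral_const_mul, ← integral_const_mul, ← integral_sub
      ((by fun_prop : Continuous _).intervalIntegrable _ _)
      ((by fun_prop : Continuous _).intervalIntegrable _ _)]
  refine integral_congr fun θ _ => ?_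
  have hpos := sq_add_one_sub_two_mul_mul_cos_pos hs θ
  have hρ_pow : (s ^ 2 + 1 - 2 * s * cos θ) ^ (p - 1) =
      (s ^ 2 + 1 - 2 * s * cos θ) ^ (p - 2) * (s ^ 2 + 1 - 2 * s * cos θ) := by
    rw [← rpow_add_one hpos.ne']; ring_nf
  have hexp : p - 1 - 1 = p - 2 := by ring
  simp only [hρ_pow, hexp]
  linear_combination
    4 * p * (p - 1) * w θ * (s ^ 2 + 1 - 2 * s * cos θ) ^ (p - 2) * sin_sq_add_cos_sq θ

end KernelIntegral

theorem stmt_3_general (d : ℕ) (α : ℝ) (r : ℝ) (hr : r ∈ Set.Ioo (-1 : ℝ) 1) :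
    deriv (deriv (fun s : ℝ =>
      ∫ θ in (0:ℝ)..π,
        Real.sin θ ^ d / (s ^ 2 + 1 - 2 * s * Real.cos θ) ^ (((d : ℝ) + α) / 2))) r
    = ((d : ℝ) + α) *
        (((d : ℝ) + α + 1) *
            (∫ θ in (0:ℝ)..π,
              Real.sin θ ^ d / (r ^ 2 + 1 - 2 * r * Real.cos θ) ^ (((d : ℝ) + (α + 2)) / 2))
         - ((d : ℝ) + α + 2) *
            (∫ θ in (0:ℝ)..π,
              Real.sin θ ^ (d + 2) /
                (r ^ 2 + 1 - 2 * r * Real.cos θ) ^ ((((d : ℝ) + 2) + (α + 2)) / 2))) := by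
  obtain ⟨p, hp⟩ : ∃ p : ℝ, (d : ℝ) + α = -2 * p := ⟨-(((d : ℝ) + α) / 2), by ring⟩
  rw [show ((d : ℝ) + (α + 2)) / 2 = -(p - 1) by linarith,
    show ((d : ℝ) + 2 + (α + 2)) / 2 = -(p - 2) by linarith, hp,
    show -2 * p / 2 = -p by ring]
  have hf :
      (fun s => ∫ θ in (0:ℝ)..π, sin θ ^ d / (s ^ 2 + 1 - 2 * s * cos θ) ^ (-p)) =ᶠ[𝓝 r]
        fun s => ∫ θ in (0:ℝ)..π, sin θ ^ d * (s ^ 2 + 1 - 2 * s * cos θ) ^ p := by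
    filter_upwards [isOpen_Ioo.mem_nhds hr] with s hs
    exact integral_div_kernel_rpow_neg _ _ _ _ hs
  rw [hf.deriv.deriv_eq,
    deriv_deriv_integral_mul_kernel_rpow (w := fun θ => sin θ ^ d) (by fun_prop) _ _ _ hr,
    integral_div_kernel_rpow_neg _ _ _ _ hr, integral_div_kernel_rpow_neg _ _ _ _ hr]
  simp only [pow_add]
  ring

/-- Recurrence for the second derivative of f(r,d,α). -/
theorem stmt_3 (d : ℕ) (hd : 2 ≤ d) (α : ℝ) (r : ℝ) (hr : r ∈ Set.Ioo (-1 : ℝ) 1) :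
    deriv (deriv (fun s : ℝ =>
      ∫ θ in (0:ℝ)..π,
        Real.sin θ ^ d / (s ^ 2 + 1 - 2 * s * Real.cos θ) ^ (((d : ℝ) + α) / 2))) r
    = ((d : ℝ) + α) *
        (((d : ℝ) + α + 1) *
            (∫ θ in (0:ℝ)..π,
              Real.sin θ ^ d / (r ^ 2 + 1 - 2 * r * Real.cos θ) ^ (((d : ℝ) + (α + 2)) / 2))
         - ((d : ℝ) + α + 2) *
            (∫ θ in (0:ℝ)..π,
              Real.sin θ ^ (d + 2) /
                (r ^ 2 + 1 - 2 * r * Real.cos θ) ^ ((((d : ℝ) + 2) + (α + 2)) / 2))) :=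
  stmt_3_general d α r hr
end

section
/- For d ≥ 2 and α = 0, the function g(r) = σ_{d-1} ∫_0^π cos θ sin^{d-2}θ (r²+1−2r cos θ)^{−(d−2)/2} dθ is linear on (−1,1): g(r) = r·((d−2)/d)·σ_d for all r ∈ (−1,1). -/
/-!
Let `ρ(θ) = |e^{iθ} - r|`. Integrating the derivative of `sin^{m+1} θ / ρ^m` over `[0, π]` gives
`(m + 1) ∫ cos θ sin^m θ / ρ^m = m r ∫ sin^{m+2} θ / ρ^{m+2}`, and the last integral does not
depend on `r` (Newton's theorem that a uniform spherical shell exerts no force inside it): in terms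
of the angle `φ` under which `e^{iθ}` is seen from `r` it becomes
`∫ sin^{m+2} φ (1 - r cos φ / √(1 - r² sin² φ)) dφ`, and the correction term is odd under
`φ ↦ π - φ`. The Wallis recursion and `σ_{n+2} = σ_{n+1} ∫₀^π sin^n` finish the computation.
-/

open Real intervalIntegral Set

/-- `σ_n = 2 π^{n/2} / Γ(n/2)`, the area of the unit sphere in `ℝⁿ`. -/
noncomputable def sphereArea (x : ℝ) : ℝ := 2 * π ^ (x / 2) / Gamma (x / 2)

lemma sphereArea_one : sphereArea 1 = 2 := by
  rw [sphereArea, ← sqrt_eq_rpow, Gamma_one_half_eq, mul_div_assoc, div_self (by positivity),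
    mul_one]

lemma sphereArea_two : sphereArea 2 = 2 * π := by
  simp [sphereArea]

lemma sphereArea_add_two {x : ℝ} (hx : 0 < x) :
    sphereArea (x + 2) = 2 * π / x * sphereArea x := by
  have hΓ : Gamma (x / 2) ≠ 0 := (Gamma_pos_of_pos (by positivity)).ne'
  rw [sphereArea, sphereArea, show (x + 2) / 2 = x / 2 + 1 by ring, Gamma_add_one (by positivity),
    rpow_add_one pi_pos.ne']
  field_simp

lemma sphereArea_succ_mul_integral_sin_pow (n : ℕ) :
    sphereArea (n + 1) * ∫ θ in 0..π, sin θ ^ n = sphereArea (n + 2) := by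
  induction n using Nat.twoStepInduction with
  | zero => norm_num [sphereArea_one, sphereArea_two]
  | one =>
    rw [show ((1 : ℕ) : ℝ) + 2 = 1 + 2 by norm_num, sphereArea_add_two one_pos]
    norm_num [sphereArea_one, sphereArea_two]
  | more n ih _ =>
    have hn : (0 : ℝ) < n + 1 := by positivity
    rw [integral_sin_pow, sin_zero, sin_pi,
      show ((n + 2 : ℕ) : ℝ) + 1 = n + 1 + 2 by push_cast; ring,
      show ((n + 2 : ℕ) : ℝ) + 2 = n + 2 + 2 by push_cast; ring,
      sphereArea_add_two hn, sphereArea_add_two (by positivity), ← ih]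
    field_simp
    ring

lemma integral_comp_sin_mul_cos_eq_zero (f : ℝ → ℝ) :
    ∫ x in 0..π, f (sin x) * cos x = 0 := by
  have h := integral_comp_sub_left (a := 0) (b := π) (fun x => f (sin x) * cos x) π
  simp only [sin_pi_sub, cos_pi_sub, mul_neg, integral_neg, sub_self, sub_zero] at h
  linarith

/-- The distance from `(r, 0)` to `(cos θ, sin θ)`. -/
noncomputable def circleDist (r θ : ℝ) : ℝ := √(r ^ 2 + 1 - 2 * r * cos θ)

/-- The polar angle of `(cos θ, sin θ)` as seen from `(r, 0)`, for `sin θ ≥ 0`. -/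
noncomputable def viewAngle (r θ : ℝ) : ℝ := arccos ((cos θ - r) / circleDist r θ)

section

variable {r : ℝ}

lemma circleDist_sq (r θ : ℝ) : circleDist r θ ^ 2 = r ^ 2 + 1 - 2 * r * cos θ :=
  sq_sqrt (by nlinarith [sin_sq_add_cos_sq θ, sq_nonneg (r - cos θ), sq_nonneg (sin θ)])

lemma sq_cos_sub_add_sq_sin (r θ : ℝ) : (cos θ - r) ^ 2 + sin θ ^ 2 = circleDist r θ ^ 2 := by
  rw [circleDist_sq]
  linear_combination sin_sq_add_cos_sq θ

@[fun_prop]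
lemma continuous_circleDist (r : ℝ) : Continuous (circleDist r) := by
  unfold circleDist
  fun_prop

lemma circleDist_pos (hr : |r| ≠ 1) (θ : ℝ) : 0 < circleDist r θ := by
  refine sqrt_pos.mpr (lt_of_le_of_ne ?_ fun h => hr ?_)
  · nlinarith [sin_sq_add_cos_sq θ, sq_nonneg (r - cos θ), sq_nonneg (sin θ)]
  · have hcos : r = cos θ := by
      nlinarith [sin_sq_add_cos_sq θ, sq_nonneg (r - cos θ), sq_nonneg (sin θ)]
    have hr2 : r ^ 2 = 1 := by nlinarith [sin_sq_add_cos_sq θ]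
    rw [← sqrt_sq_eq_abs, hr2, sqrt_one]

lemma circleDist_zero (hr : r < 1) : circleDist r 0 = 1 - r := by
  rw [circleDist, cos_zero, show r ^ 2 + 1 - 2 * r * 1 = (1 - r) ^ 2 by ring,
    sqrt_sq (by linarith)]

lemma circleDist_pi (hr : -1 < r) : circleDist r π = 1 + r := by
  rw [circleDist, cos_pi, show r ^ 2 + 1 - 2 * r * -1 = (1 + r) ^ 2 by ring,
    sqrt_sq (by linarith)]

lemma hasDerivAt_circleDist (hr : |r| ≠ 1) (θ : ℝ) :
    HasDerivAt (circleDist r) (r * sin θ / circleDist r θ) θ := by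
  have hQ : HasDerivAt (fun θ => r ^ 2 + 1 - 2 * r * cos θ) (2 * r * sin θ) θ := by
    simpa using ((hasDerivAt_cos θ).const_mul (2 * r)).const_sub (r ^ 2 + 1)
  refine (hQ.sqrt ?_).congr_deriv ?_
  · rw [← circleDist_sq]
    exact (pow_pos (circleDist_pos hr θ) 2).ne'
  · rw [circleDist]
    ring

lemma one_sub_mul_cos_pos (hr : |r| < 1) (θ : ℝ) : 0 < 1 - r * cos θ := by
  have h : |r * cos θ| < 1 := (abs_mul r (cos θ)).trans_lt
    (mul_lt_one_of_nonneg_of_lt_one_left (abs_nonneg r) hr (abs_cos_le_one θ))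
  linarith [le_abs_self (r * cos θ)]

lemma cos_viewAngle (hr : |r| ≠ 1) (θ : ℝ) :
    cos (viewAngle r θ) = (cos θ - r) / circleDist r θ := by
  have hρ := circleDist_pos hr θ
  have h : |cos θ - r| ≤ circleDist r θ :=
    abs_le_of_sq_le_sq (by nlinarith [sq_cos_sub_add_sq_sin r θ, sq_nonneg (sin θ)]) hρ.le
  rw [viewAngle, cos_arccos] <;>
  [rw [le_div_iff₀ hρ]; rw [div_le_iff₀ hρ]] <;> linarith [abs_le.mp h]

lemma sin_viewAngle (hr : |r| ≠ 1) {θ : ℝ} (hθ : 0 ≤ sin θ) :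
    sin (viewAngle r θ) = sin θ / circleDist r θ := by
  have hρ := circleDist_pos hr θ
  rw [viewAngle, sin_arccos, ← sqrt_sq (div_nonneg hθ hρ.le)]
  congr 1
  field_simp
  linear_combination -sq_cos_sub_add_sq_sin r θ

lemma hasDerivAt_viewAngle (hr : |r| ≠ 1) {θ : ℝ} (hθ : 0 < sin θ) :
    HasDerivAt (viewAngle r) ((1 - r * cos θ) / circleDist r θ ^ 2) θ := by
  have hρ := circleDist_pos hr θ
  have hv : ((cos θ - r) / circleDist r θ) ^ 2 < 1 := by
    rw [div_pow, div_lt_one (by positivity)]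
    nlinarith [sq_cos_sub_add_sq_sin r θ]
  have hv' := ((hasDerivAt_cos θ).sub_const r).fun_div (hasDerivAt_circleDist hr θ) hρ.ne'
  refine ((hasDerivAt_arccos ?_ ?_).comp θ hv').congr_deriv ?_
  · rintro h
    rw [h] at hv
    norm_num at hv
  · rintro h
    rw [h] at hv
    norm_num at hv
  · rw [← sin_arccos, ← viewAngle, sin_viewAngle hr hθ.le]
    field_simp
    linear_combination circleDist_sq r θ

lemma viewAngle_zero (hr : |r| < 1) : viewAngle r 0 = 0 := by
  have h1 : 1 - r ≠ 0 := by linarith [(abs_lt.mp hr).2]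
  rw [viewAngle, cos_zero, circleDist_zero (abs_lt.mp hr).2, div_self h1, arccos_one]

lemma viewAngle_pi (hr : |r| < 1) : viewAngle r π = π := by
  have h1 : 1 + r ≠ 0 := by linarith [(abs_lt.mp hr).1]
  rw [viewAngle, cos_pi, circleDist_pi (abs_lt.mp hr).1, show -1 - r = -(1 + r) by ring,
    neg_div, div_self h1, arccos_neg_one]

/-- Seen from `r`, the unit circle lies at distance `√(1 - r² sin² φ) - r cos φ` in the direction
`φ`; this is where the integrand in `φ` comes from. -/
lemma viewAngle_substitution (hr : |r| < 1) (n : ℕ) {θ : ℝ} (hθ : 0 ≤ sin θ) :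
    (sin (viewAngle r θ) ^ n - r * (sin (viewAngle r θ) ^ n
        / √(1 - r ^ 2 * sin (viewAngle r θ) ^ 2) * cos (viewAngle r θ)))
      * ((1 - r * cos θ) / circleDist r θ ^ 2)
      = sin θ ^ n / circleDist r θ ^ n := by
  have hr' : |r| ≠ 1 := hr.ne
  have hρ := circleDist_pos hr' θ
  have hc := one_sub_mul_cos_pos hr θ
  have hsqrt : √(1 - r ^ 2 * sin (viewAngle r θ) ^ 2) = (1 - r * cos θ) / circleDist r θ := by
    rw [sin_viewAngle hr' hθ, ← sqrt_sq (div_nonneg hc.le hρ.le)]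
    congr 1
    field_simp
    linear_combination (-r ^ 2) * sin_sq_add_cos_sq θ + circleDist_sq r θ
  rw [hsqrt, sin_viewAngle hr' hθ, cos_viewAngle hr', div_pow]
  field_simp [hc.ne']
  linear_combination (-sin θ ^ n) * circleDist_sq r θ

lemma integral_sin_pow_div_circleDist_pow (hr : |r| < 1) (n : ℕ) :
    ∫ θ in 0..π, sin θ ^ n / circleDist r θ ^ n = ∫ θ in 0..π, sin θ ^ n := by
  have hr' : |r| ≠ 1 := hr.ne
  have hρ : ∀ θ, circleDist r θ ≠ 0 := fun θ => (circleDist_pos hr' θ).ne'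
  have hsqrt : ∀ ψ, √(1 - r ^ 2 * sin ψ ^ 2) ≠ 0 := fun ψ => by
    have hr2 : r ^ 2 < 1 := by nlinarith [abs_lt.mp hr]
    exact (sqrt_pos.mpr (by nlinarith [sin_sq_le_one ψ, sq_nonneg r])).ne'
  set g : ℝ → ℝ := fun ψ => sin ψ ^ n - r * (sin ψ ^ n / √(1 - r ^ 2 * sin ψ ^ 2) * cos ψ)
  have hg : Continuous g := by fun_prop (disch := exact hsqrt _)
  calc ∫ θ in 0..π, sin θ ^ n / circleDist r θ ^ n
      = ∫ θ in 0..π, (g ∘ viewAngle r) θ * ((1 - r * cos θ) / circleDist r θ ^ 2) := by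
        refine integral_congr fun θ hθ => (viewAngle_substitution hr n ?_).symm
        rw [uIcc_of_le pi_pos.le] at hθ
        exact sin_nonneg_of_nonneg_of_le_pi hθ.1 hθ.2
    _ = ∫ ψ in 0..π, g ψ := by
        rw [integral_comp_mul_deriv'', viewAngle_zero hr, viewAngle_pi hr]
        · exact continuous_arccos.comp_continuousOn
            ((continuous_cos.sub continuous_const).div (continuous_circleDist r) hρ).continuousOn
        · rw [min_eq_left pi_pos.le, max_eq_right pi_pos.le]
          exact fun θ hθ =>
            (hasDerivAt_viewAngle hr' (sin_pos_of_pos_of_lt_pi hθ.1 hθ.2)).hasDerivWithinAt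
        · exact ((continuous_const.sub (continuous_const.mul continuous_cos)).div
            ((continuous_circleDist r).pow 2) fun θ => pow_ne_zero 2 (hρ θ)).continuousOn
        · exact hg.continuousOn
    _ = ∫ θ in 0..π, sin θ ^ n := by
        rw [integral_sub, integral_const_mul,
          integral_comp_sin_mul_cos_eq_zero (fun u => u ^ n / √(1 - r ^ 2 * u ^ 2)),
          mul_zero, sub_zero]
        all_goals
          exact Continuous.intervalIntegrable (by fun_prop (disch := exact hsqrt _)) _ _

lemma hasDerivAt_sin_pow_succ_div_circleDist_pow (hr : |r| ≠ 1) (m : ℕ) (θ : ℝ) :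
    HasDerivAt (fun θ => sin θ ^ (m + 1) / circleDist r θ ^ m)
      ((m + 1) * (cos θ * sin θ ^ m / circleDist r θ ^ m)
        - m * r * (sin θ ^ (m + 2) / circleDist r θ ^ (m + 2))) θ := by
  have hρ := (circleDist_pos hr θ).ne'
  refine (((hasDerivAt_sin θ).fun_pow (m + 1)).fun_div ((hasDerivAt_circleDist hr θ).fun_pow m)
    (pow_ne_zero m hρ)).congr_deriv ?_
  rcases m with _ | k
  · simp
  · push_cast
    field_simp
    ring

lemma integral_cos_mul_sin_pow_div_circleDist_pow (hr : |r| ≠ 1) (m : ℕ) :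
    (m + 1) * ∫ θ in 0..π, cos θ * sin θ ^ m / circleDist r θ ^ m
      = m * r * ∫ θ in 0..π, sin θ ^ (m + 2) / circleDist r θ ^ (m + 2) := by
  have hρ : ∀ k θ, circleDist r θ ^ k ≠ 0 := fun k θ => pow_ne_zero k (circleDist_pos hr θ).ne'
  have hFTC := integral_eq_sub_of_hasDerivAt
    (fun θ _ => hasDerivAt_sin_pow_succ_div_circleDist_pow hr m θ)
    (Continuous.intervalIntegrable (by fun_prop (disch := exact hρ _)) 0 π)
  rw [integral_sub, integral_const_mul, integral_const_mul] at hFTC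
  · simp only [sin_pi, sin_zero, zero_pow m.succ_ne_zero, zero_div, sub_self] at hFTC
    linarith
  all_goals exact Continuous.intervalIntegrable (by fun_prop (disch := exact hρ _)) _ _

end

/-- The α = 0 kernel is linear on (−1,1). -/
theorem stmt_7 (d : ℕ) (hd : 2 ≤ d) (r : ℝ) (hr : r ∈ Set.Ioo (-1 : ℝ) 1) :
    (2 * Real.pi ^ (((d : ℝ) - 1) / 2) / Real.Gamma (((d : ℝ) - 1) / 2)) *
      ∫ θ in (0:ℝ)..π,
        Real.cos θ * Real.sin θ ^ (d - 2) /
          (r ^ 2 + 1 - 2 * r * Real.cos θ) ^ (((d : ℝ) - 2) / 2)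
    = r * (((d : ℝ) - 2) / (d : ℝ)) *
        (2 * Real.pi ^ ((d : ℝ) / 2) / Real.Gamma ((d : ℝ) / 2)) := by
  obtain ⟨m, rfl⟩ : ∃ m : ℕ, d = m + 2 := ⟨d - 2, by omega⟩
  have hr : |r| < 1 := abs_lt.mpr hr
  have hintegrand : ∀ θ, cos θ * sin θ ^ (m + 2 - 2) /
      (r ^ 2 + 1 - 2 * r * cos θ) ^ ((((m + 2 : ℕ) : ℝ) - 2) / 2)
      = cos θ * sin θ ^ m / circleDist r θ ^ m := fun θ => by
    rw [Nat.add_sub_cancel, show (((m + 2 : ℕ) : ℝ) - 2) / 2 = (m : ℝ) / 2 by push_cast; ring,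
      rpow_div_two_eq_sqrt _ (circleDist_sq r θ ▸ sq_nonneg _), rpow_natCast, circleDist]
  have hibp := integral_cos_mul_sin_pow_div_circleDist_pow hr.ne m
  rw [integral_sin_pow_div_circleDist_pow hr, integral_sin_pow] at hibp
  simp only [sin_zero, sin_pi, zero_pow m.succ_ne_zero, zero_mul, sub_self, zero_div,
    zero_add] at hibp
  have hI : ∫ θ in 0..π, cos θ * sin θ ^ m / circleDist r θ ^ m
      = m * r / (m + 2) * ∫ θ in 0..π, sin θ ^ m := by
    refine mul_left_cancel₀ (by positivity : (m : ℝ) + 1 ≠ 0) ?_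
    rw [hibp]
    field_simp
  show sphereArea (((m + 2 : ℕ) : ℝ) - 1) * _ = _ * sphereArea ((m + 2 : ℕ) : ℝ)
  rw [integral_congr fun θ _ => hintegrand θ, hI]
  push_cast
  rw [show (m : ℝ) + 2 - 1 = m + 1 by ring, ← sphereArea_succ_mul_integral_sin_pow]
  ring
end

section
/- Let d ≥ 2 and 0 < α < 2, and let a_{2n+1} = σ_d · [α(α+2)⋯(α+2n−2)/(2n)!!] · [(d+α−2)(d+α)⋯(d+α+2n−2)]/[d(d+2)⋯(d+2n)]. Then there exist constants c, C > 0 (depending on d, α) such that c·n^{α−2} ≤ a_{2n+1} ≤ C·n^{α−2} for all n ≥ 1. -/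
open Real Finset

/-!
Put `t = (2 - α) / 2 ∈ (0, 1)`. Both ratios in `a_{2n+1}` are products
`∏_{k<n} (1 - t / (k + c))`, with `c = 1` and `c = d / 2`. Bernoulli's inequality for the
exponent `t` gives `1 - t / y ≤ (y / (y + 1)) ^ t ≤ 1 - t / (y + 1)`, so each such product is
squeezed between shifts of the telescoping product
`∏_{k<n} ((k + c) / (k + c + 1)) ^ t = (c / (n + c)) ^ t`, hence is of order `n ^ (-t)`.
The product of the two ratios is then of order `n ^ (-2t) = n ^ (α - 2)`.
-/

section Bernoulli

variable {t y : ℝ}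

lemma rpow_div_add_one_le_one_sub_div (ht0 : 0 ≤ t) (ht1 : t ≤ 1) (hy : 0 ≤ y) :
    (y / (y + 1)) ^ t ≤ 1 - t / (y + 1) := by
  have hy1 : 0 < y + 1 := by linarith
  have hs : (-1 : ℝ) ≤ -(1 / (y + 1)) := by
    have := (div_le_one hy1).2 (by linarith : (1 : ℝ) ≤ y + 1)
    linarith
  calc (y / (y + 1)) ^ t = (1 + -(1 / (y + 1))) ^ t := by congr 1; field_simp; ring
    _ ≤ 1 + t * -(1 / (y + 1)) := rpow_one_add_le_one_add_mul_self hs ht0 ht1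
    _ = 1 - t / (y + 1) := by ring

lemma one_sub_div_le_rpow_div_add_one (ht0 : 0 ≤ t) (ht1 : t ≤ 1) (hy : 0 < y) :
    1 - t / y ≤ (y / (y + 1)) ^ t := by
  have hu : 0 ≤ t / y := by positivity
  have hbern : (1 + 1 / y) ^ t ≤ 1 + t / y := by
    simpa only [mul_one_div] using
      rpow_one_add_le_one_add_mul_self
        (neg_one_lt_zero.trans_le (one_div_nonneg.2 hy.le)).le ht0 ht1
  calc 1 - t / y ≤ (1 + t / y)⁻¹ := by
        rw [← one_div, le_div_iff₀ (by positivity)]; nlinarith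
    _ ≤ ((1 + 1 / y) ^ t)⁻¹ := inv_anti₀ (by positivity) hbern
    _ = (y / (y + 1)) ^ t := by
        rw [← inv_rpow (by positivity)]; congr 1; field_simp

end Bernoulli

lemma prod_range_add_div_add_add_one {c : ℝ} (hc : 0 < c) (n : ℕ) :
    ∏ k ∈ range n, ((k + c) / (k + c + 1)) = c / (n + c) := by
  induction n with
  | zero => simp [hc.ne']
  | succ n ih =>
    rw [prod_range_succ, ih, div_mul_div_comm, mul_comm c, mul_div_mul_left _ _ (by positivity)]
    push_cast; ring_nf

section ProdBounds

variable {t c : ℝ}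

lemma prod_one_sub_div_le_rpow (ht0 : 0 ≤ t) (ht1 : t ≤ 1) (hc : 0 < c) (htc : t ≤ c)
    (n : ℕ) :
    ∏ k ∈ range n, (1 - t / (k + c)) ≤ (c / (n + c)) ^ t := by
  calc ∏ k ∈ range n, (1 - t / (k + c))
      ≤ ∏ k ∈ range n, ((k + c) / (k + c + 1)) ^ t := by
        refine prod_le_prod (fun k _ => ?_) (fun k _ =>
          one_sub_div_le_rpow_div_add_one ht0 ht1 (by positivity))
        rw [sub_nonneg, div_le_one (by positivity)]
        linarith [k.cast_nonneg (α := ℝ)]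
    _ = (c / (n + c)) ^ t := by
        rw [finsetProd_rpow _ _ (fun k _ => by positivity), prod_range_add_div_add_add_one hc]

lemma rpow_le_prod_one_sub_div_add_one (ht0 : 0 ≤ t) (ht1 : t ≤ 1) (hc : 0 < c) (n : ℕ) :
    (c / (n + c)) ^ t ≤ ∏ k ∈ range n, (1 - t / (k + c + 1)) := by
  calc (c / (n + c)) ^ t = ∏ k ∈ range n, ((k + c) / (k + c + 1)) ^ t := by
        rw [finsetProd_rpow _ _ (fun k _ => by positivity), prod_range_add_div_add_add_one hc]
    _ ≤ ∏ k ∈ range n, (1 - t / (k + c + 1)) :=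
        prod_le_prod (fun k _ => by positivity) (fun k _ =>
          rpow_div_add_one_le_one_sub_div ht0 ht1 (by positivity))

end ProdBounds

def ComparableToRpow (f : ℕ → ℝ) (p : ℝ) : Prop :=
  ∃ c C : ℝ, 0 < c ∧ 0 < C ∧
    ∀ n : ℕ, 1 ≤ n → c * (n : ℝ) ^ p ≤ f n ∧ f n ≤ C * (n : ℝ) ^ p

namespace ComparableToRpow

variable {f g : ℕ → ℝ} {p q : ℝ}

lemma mul (hf : ComparableToRpow f p) (hg : ComparableToRpow g q) :
    ComparableToRpow (fun n => f n * g n) (p + q) := by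
  obtain ⟨b₁, B₁, hb₁, hB₁, hf⟩ := hf
  obtain ⟨b₂, B₂, hb₂, hB₂, hg⟩ := hg
  refine ⟨b₁ * b₂, B₁ * B₂, by positivity, by positivity, fun n hn => ?_⟩
  have hn0 : (0 : ℝ) < n := by exact_mod_cast hn
  obtain ⟨hf₁, hf₂⟩ := hf n hn
  obtain ⟨hg₁, hg₂⟩ := hg n hn
  have hf0 : 0 ≤ f n := le_trans (by positivity) hf₁
  have hg0 : 0 ≤ g n := le_trans (by positivity) hg₁
  rw [rpow_add hn0]
  constructor
  · calc b₁ * b₂ * ((n : ℝ) ^ p * (n : ℝ) ^ q)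
        = (b₁ * (n : ℝ) ^ p) * (b₂ * (n : ℝ) ^ q) := by ring
      _ ≤ f n * g n := mul_le_mul hf₁ hg₁ (by positivity) hf0
  · calc f n * g n ≤ (B₁ * (n : ℝ) ^ p) * (B₂ * (n : ℝ) ^ q) :=
          mul_le_mul hf₂ hg₂ hg0 (by positivity)
      _ = B₁ * B₂ * ((n : ℝ) ^ p * (n : ℝ) ^ q) := by ring

lemma const_mul (hf : ComparableToRpow f p) {S : ℝ} (hS : 0 < S) :
    ComparableToRpow (fun n => S * f n) p := by
  obtain ⟨b, B, hb, hB, hf⟩ := hf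
  refine ⟨S * b, S * B, by positivity, by positivity, fun n hn => ?_⟩
  obtain ⟨hf₁, hf₂⟩ := hf n hn
  rw [mul_assoc, mul_assoc]
  exact ⟨mul_le_mul_of_nonneg_left hf₁ hS.le, mul_le_mul_of_nonneg_left hf₂ hS.le⟩

lemma comp_succ (hf : ComparableToRpow f p) (hp : p ≤ 0) :
    ComparableToRpow (fun n => f (n + 1)) p := by
  obtain ⟨b, B, hb, hB, hf⟩ := hf
  refine ⟨b * 2 ^ p, B, by positivity, hB, fun n hn => ?_⟩
  have hn0 : (0 : ℝ) < n := by exact_mod_cast hn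
  have hn1 : (1 : ℝ) ≤ n := by exact_mod_cast hn
  obtain ⟨hf₁, hf₂⟩ := hf (n + 1) (by omega)
  push_cast at hf₁ hf₂
  constructor
  · calc b * 2 ^ p * (n : ℝ) ^ p = b * (2 * n) ^ p := by
          rw [mul_rpow (by norm_num) hn0.le, mul_assoc]
      _ ≤ b * ((n : ℝ) + 1) ^ p :=
          mul_le_mul_of_nonneg_left (rpow_le_rpow_of_nonpos (by positivity) (by linarith) hp) hb.le
      _ ≤ f (n + 1) := hf₁
  · calc f (n + 1) ≤ B * ((n : ℝ) + 1) ^ p := hf₂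
      _ ≤ B * (n : ℝ) ^ p :=
          mul_le_mul_of_nonneg_left (rpow_le_rpow_of_nonpos hn0 (by linarith) hp) hB.le

end ComparableToRpow

lemma comparableToRpow_prod_one_sub_div {t c : ℝ} (ht0 : 0 ≤ t) (ht1 : t ≤ 1) (hc : 0 < c)
    (htc : t < c) : ComparableToRpow (fun n => ∏ k ∈ range n, (1 - t / (k + c))) (-t) := by
  have hc0 : 0 < 1 - t / c := by rw [sub_pos, div_lt_one hc]; exact htc
  refine ⟨(1 - t / c) * (c / (1 + c)) ^ t, c ^ t, by positivity, by positivity, fun n hn => ?_⟩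
  obtain ⟨m, rfl⟩ : ∃ m, n = m + 1 := ⟨n - 1, by omega⟩
  set x : ℝ := ((m + 1 : ℕ) : ℝ) with hx
  have hx0 : 0 < x := by positivity
  have hdiv_rpow : ∀ b : ℝ, 0 ≤ b → (b / x) ^ t = b ^ t * x ^ (-t) := fun b hb => by
    rw [div_rpow hb hx0.le, rpow_neg hx0.le, div_eq_mul_inv]
  constructor
  · have hmx : (m : ℝ) + c ≤ (1 + c) * x := by rw [hx]; push_cast; nlinarith
    calc (1 - t / c) * (c / (1 + c)) ^ t * x ^ (-t)
        = (1 - t / c) * (c / (1 + c) / x) ^ t := by rw [hdiv_rpow _ (by positivity), mul_assoc]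
      _ ≤ (1 - t / c) * (c / (m + c)) ^ t := by
          rw [div_div]
          gcongr _ * (c / ?_) ^ _
      _ ≤ (1 - t / c) * ∏ k ∈ range m, (1 - t / (k + c + 1)) := by
          gcongr; exact rpow_le_prod_one_sub_div_add_one ht0 ht1 hc m
      _ = ∏ k ∈ range (m + 1), (1 - t / (k + c)) := by
          rw [prod_range_succ', mul_comm]; push_cast; simp only [add_right_comm, zero_add]
  · calc ∏ k ∈ range (m + 1), (1 - t / (k + c)) ≤ (c / (x + c)) ^ t :=
          prod_one_sub_div_le_rpow ht0 ht1 hc htc.le (m + 1)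
      _ ≤ (c / x) ^ t := by gcongr; linarith
      _ = c ^ t * x ^ (-t) := hdiv_rpow c hc.le

lemma prod_div_prod_eq_prod_one_sub_div {x y b t c : ℝ} (hb : 0 < b) (hy : 0 < y)
    (ht : y - x = b * t) (hc : y = b * c) (n : ℕ) :
    (∏ k ∈ range n, (x + b * k)) / ∏ k ∈ range n, (y + b * k) =
      ∏ k ∈ range n, (1 - t / (k + c)) := by
  rw [← prod_div_distrib]
  refine prod_congr rfl fun k _ => ?_
  have hk : 0 < y + b * k := by positivity
  have hck : (k : ℝ) + c = (y + b * k) / b := by rw [hc]; field_simp; ring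
  rw [hck]
  field_simp
  linarith

/-- Asymptotics a_{2n+1} ∼ n^{α−2}. -/
theorem stmt_10 (d : ℕ) (hd : 2 ≤ d) (α : ℝ) (hα0 : 0 < α) (hα2 : α < 2)
    (a : ℕ → ℝ)
    (ha : ∀ n : ℕ, a n =
      (2 * Real.pi ^ ((d : ℝ) / 2) / Real.Gamma ((d : ℝ) / 2)) *
        ((∏ k ∈ Finset.range n, (α + 2 * (k : ℝ))) / (∏ k ∈ Finset.range n, (2 * ((k : ℝ) + 1)))) *
        ((∏ k ∈ Finset.range (n + 1), ((d : ℝ) + α - 2 + 2 * (k : ℝ))) /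
          (∏ k ∈ Finset.range (n + 1), ((d : ℝ) + 2 * (k : ℝ))))) :
    ∃ c C : ℝ, 0 < c ∧ 0 < C ∧
      ∀ n : ℕ, 1 ≤ n → c * (n : ℝ) ^ (α - 2) ≤ a n ∧ a n ≤ C * (n : ℝ) ^ (α - 2) := by
  obtain ⟨t, ht⟩ : ∃ t : ℝ, t = (2 - α) / 2 := ⟨_, rfl⟩
  have ht0 : 0 < t := by linarith
  have ht1 : t < 1 := by linarith
  have hd2 : (2 : ℝ) ≤ d := by exact_mod_cast hd
  have hsphere : 0 < 2 * π ^ ((d : ℝ) / 2) / Gamma ((d : ℝ) / 2) := by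
    have := Gamma_pos_of_pos (by positivity : (0 : ℝ) < d / 2)
    positivity
  have hP₁ := comparableToRpow_prod_one_sub_div ht0.le ht1.le one_pos ht1
  have hP₂ := (comparableToRpow_prod_one_sub_div ht0.le ht1.le (c := d / 2) (by positivity)
    (by linarith)).comp_succ (by linarith)
  have hfactor : a = fun n => 2 * π ^ ((d : ℝ) / 2) / Gamma ((d : ℝ) / 2) *
      ((∏ k ∈ range n, (1 - t / (k + 1))) *
        ∏ k ∈ range (n + 1), (1 - t / (k + d / 2))) := by
    funext n
    have hden : ∏ k ∈ range n, 2 * ((k : ℝ) + 1) = ∏ k ∈ range n, (2 + 2 * (k : ℝ)) :=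
      prod_congr rfl fun k _ => by ring
    rw [ha, hden, mul_assoc,
      prod_div_prod_eq_prod_one_sub_div (t := t) two_pos two_pos (by linarith) (mul_one 2).symm,
      prod_div_prod_eq_prod_one_sub_div (t := t) (c := d / 2) two_pos (by positivity) (by linarith)
        (by ring)]
  have h := (hP₁.mul hP₂).const_mul hsphere
  rwa [← hfactor, show -t + -t = α - 2 by linarith] at h
end

section
/- Let d ≥ 1, 2 − d < α < 2, and let g: (0,∞) → ℝ be the kernel g(r) = ∫_{S¹} y₁ |r e₁ − y|^{−(d−2+α)} dσ(y) (for d ≥ 2). Then for every r > 0 with r ≠ 1, g(1/r) = r^{d−2+α} g(r). -/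
open Real

/-- Scaling identity g(1/r) = r^{d-2+α} g(r) for the kernel (d ≥ 2, polar form). -/
theorem stmt_11 (d : ℕ) (hd : 2 ≤ d) (α : ℝ) (hα1 : 2 - (d : ℝ) < α) (hα2 : α < 2)
    (g : ℝ → ℝ)
    (hg : ∀ r : ℝ, 0 < r → g r =
      ∫ θ in (0:ℝ)..π,
        Real.cos θ * Real.sin θ ^ (d - 2) /
          (r ^ 2 + 1 - 2 * r * Real.cos θ) ^ (((d : ℝ) - 2 + α) / 2))
    (r : ℝ) (hr : 0 < r) (hr1 : r ≠ 1) :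
    g (1 / r) = r ^ ((d : ℝ) - 2 + α) * g r := by
  have h1r : 0 < 1 / r := by positivity
  rw [hg r hr, hg (1 / r) h1r, ← intervalIntegral.integral_const_mul]
  apply intervalIntegral.integral_congr
  intro θ _
  have hA : 0 ≤ r ^ 2 + 1 - 2 * r * Real.cos θ := by
    nlinarith [Real.sin_sq_add_cos_sq θ, sq_nonneg (r - Real.cos θ)]
  have key : (1 / r) ^ 2 + 1 - 2 * (1 / r) * Real.cos θ =
      (r ^ 2 + 1 - 2 * r * Real.cos θ) / r ^ 2 := by
    field_simp; ring
  have hpow : (r ^ 2 : ℝ) ^ (((d : ℝ) - 2 + α) / 2) = r ^ ((d : ℝ) - 2 + α) := by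
    rw [← Real.rpow_natCast r 2, ← Real.rpow_mul hr.le]
    norm_num
    congr 1
    ring
  simp only [key, Real.div_rpow hA (by positivity : (0:ℝ) ≤ r ^ 2), div_div_eq_mul_div,
    hpow]
  ring
end

section
/- Let α ∈ (0,2), δ ∈ (−α, α), d ≥ 1, and suppose g(r) = Σ_{n≥0} a_{2n+1} r^{2n+1} on (−1,1) with a_{2n+1} > 0 and a_{2n+1} = O(n^{α−2}), and g(1/r) = r^{d−2+α} g(r) for r > 0. Then for every λ ∈ ℝ, H₁(λ) := ∫_0^∞ r^{iλ − 2 + α/2 − δ/2} g(r) dr = Σ_{n≥0} a_{2n+1} [ 1/(iλ + 2n + α/2 − δ/2) + 1/(−iλ + d + 2n + α/2 + δ/2) ], and the integral converges absolutely. -/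
/-!
Split the integral at `r = 1`. On `(0, 1)` expand `g` in its odd power series and integrate
term by term, `∫₀¹ r ^ (s + 2n + 1) dr = 1 / (s + 2n + 2)`; this is legitimate because
`∑ |aₙ| / (Re s + 2n + 2)` converges, as `aₙ = O(n ^ (α - 2))` with `α < 2`. On `(1, ∞)` the
substitution `r ↦ 1 / r` and the functional equation `g (1 / r) = r ^ (d - 2 + α) g r` turn
`r ^ s g r` into `r ^ (d - 4 + α - s) g r` on `(0, 1)`, which is treated in the same way. The
conditions `-α < δ < α` make both exponents have real part `> -2`.
-/

open Real Complex MeasureTheory Set Filter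

theorem integrable_tsum_of_summable_integral_norm {X E ι : Type*} [MeasurableSpace X]
    {μ : Measure X} [NormedAddCommGroup E] [CompleteSpace E] [Countable ι] {F : ι → X → E}
    (hF_int : ∀ i, Integrable (F i) μ) (hF_sum : Summable fun i ↦ ∫ x, ‖F i x‖ ∂μ) :
    Integrable (fun x ↦ ∑' i, F i x) μ := by
  have hF_meas i := (hF_int i).aestronglyMeasurable
  have hfin : ∑' i, ∫⁻ x, ‖F i x‖ₑ ∂μ ≠ ⊤ := by
    rw [← funext fun i ↦ ofReal_integral_norm_eq_lintegral_enorm (hF_int i),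
      ← ENNReal.ofReal_tsum_of_nonneg (fun i ↦ integral_nonneg fun _ ↦ norm_nonneg _) hF_sum]
    exact ENNReal.ofReal_ne_top
  have hsummable : ∀ᵐ x ∂μ, Summable fun i ↦ ‖F i x‖ :=
    summable_norm_of_tsum_eLpNorm_ne_top le_rfl hF_meas
      (by simpa only [eLpNorm_one_eq_lintegral_enorm] using hfin)
  refine ⟨aestronglyMeasurable_of_tendsto_ae atTop
    (fun s ↦ Finset.aestronglyMeasurable_fun_sum s fun i _ ↦ hF_meas i) ?_, ?_⟩
  · filter_upwards [hsummable] with x hx using hx.of_norm.hasSum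
  · calc ∫⁻ x, ‖∑' i, F i x‖ₑ ∂μ ≤ ∫⁻ x, ∑' i, ‖F i x‖ₑ ∂μ :=
          lintegral_mono fun _ ↦ enorm_tsum_le_tsum_enorm
      _ = ∑' i, ∫⁻ x, ‖F i x‖ₑ ∂μ := lintegral_tsum fun i ↦ (hF_meas i).enorm
      _ < ⊤ := hfin.lt_top

theorem integral_Ioo_zero_one_cpow {w : ℂ} (hw : -1 < w.re) :
    ∫ r in Ioo (0 : ℝ) 1, (r : ℂ) ^ w = 1 / (w + 1) := by
  have hw' : w + 1 ≠ 0 := ne_zero_of_re_pos (by rw [add_re, one_re]; linarith)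
  rw [← integral_Ioc_eq_integral_Ioo, ← intervalIntegral.integral_of_le zero_le_one,
    integral_cpow (Or.inl hw)]
  simp [Complex.zero_cpow hw']

theorem integral_Ioo_zero_one_norm_cpow {w : ℂ} (hw : -1 < w.re) :
    ∫ r in Ioo (0 : ℝ) 1, ‖(r : ℂ) ^ w‖ = 1 / (w.re + 1) := by
  rw [setIntegral_congr_fun measurableSet_Ioo fun r hr ↦ norm_cpow_eq_rpow_re_of_pos hr.1 w,
    ← integral_Ioc_eq_integral_Ioo, ← intervalIntegral.integral_of_le zero_le_one,
    integral_rpow (Or.inl hw)]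
  simp [Real.zero_rpow (by linarith : w.re + 1 ≠ 0)]

theorem hasSum_integral_cpow_mul_odd_powerSeries {a : ℕ → ℝ} {g : ℝ → ℝ} {s : ℂ}
    (hs : -2 < s.re) (hg : ∀ r ∈ Ioo (0 : ℝ) 1, g r = ∑' n, a n * r ^ (2 * n + 1))
    (ha : Summable fun n : ℕ ↦ |a n| / (s.re + 2 * n + 2)) :
    IntegrableOn (fun r : ℝ ↦ (r : ℂ) ^ s * (g r : ℂ)) (Ioo 0 1) ∧
      HasSum (fun n : ℕ ↦ (a n : ℂ) / (s + 2 * n + 2))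
        (∫ r in Ioo (0 : ℝ) 1, (r : ℂ) ^ s * (g r : ℂ)) := by
  set F : ℕ → ℝ → ℂ := fun n r ↦ a n * (r : ℂ) ^ (s + (2 * n + 1 : ℕ))
  have hre (n : ℕ) : -1 < (s + (2 * n + 1 : ℕ)).re := by
    rw [add_re, natCast_re]
    push_cast
    linarith [n.cast_nonneg (α := ℝ)]
  have hF_int (n : ℕ) : IntegrableOn (F n) (Ioo 0 1) :=
    ((intervalIntegral.integrableOn_Ioo_cpow_iff one_pos).2 (hre n)).const_mul _
  have hF_norm (n : ℕ) : ∫ r in Ioo (0 : ℝ) 1, ‖F n r‖ = |a n| / (s.re + 2 * n + 2) := by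
    simp only [F, norm_mul, norm_real, Real.norm_eq_abs, integral_const_mul,
      integral_Ioo_zero_one_norm_cpow (hre n), mul_one_div, add_re, natCast_re]
    push_cast
    ring
  have hF_val (n : ℕ) : ∫ r in Ioo (0 : ℝ) 1, F n r = a n / (s + 2 * n + 2) := by
    simp only [F, integral_const_mul, integral_Ioo_zero_one_cpow (hre n), mul_one_div]
    push_cast
    ring
  have hF_sum : EqOn (fun r : ℝ ↦ (r : ℂ) ^ s * (g r : ℂ)) (fun r ↦ ∑' n, F n r) (Ioo 0 1) := by
    intro r hr
    have hr0 : (r : ℂ) ≠ 0 := ofReal_ne_zero.2 hr.1.ne'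
    simp only [F, hg r hr, ofReal_tsum, ← tsum_mul_left, cpow_add _ _ hr0, cpow_natCast]
    refine tsum_congr fun n ↦ ?_
    push_cast
    ring
  have hsum : Summable fun n ↦ ∫ r in Ioo (0 : ℝ) 1, ‖F n r‖ := by simpa only [hF_norm] using ha
  refine ⟨IntegrableOn.congr_fun (integrable_tsum_of_summable_integral_norm hF_int hsum)
    hF_sum.symm measurableSet_Ioo, ?_⟩
  rw [setIntegral_congr_fun measurableSet_Ioo hF_sum]
  simpa only [hF_val] using hasSum_integral_of_summable_integral_norm hF_int hsum

theorem summable_abs_div_of_abs_le_rpow {a : ℕ → ℝ} {α C c : ℝ} (hα : α < 2) (hc : -2 < c)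
    (ha : ∀ n : ℕ, 1 ≤ n → |a n| ≤ C * (n : ℝ) ^ (α - 2)) :
    Summable fun n : ℕ ↦ |a n| / (c + 2 * n + 2) := by
  refine .of_norm_bounded_eventually_nat
    ((Real.summable_nat_rpow.2 (by linarith : α - 3 < -1)).mul_left (C / 2)) ?_
  filter_upwards [eventually_ge_atTop 1] with n hn
  have hn' : (1 : ℝ) ≤ n := by exact_mod_cast hn
  have hden : 2 * (n : ℝ) ≤ c + 2 * n + 2 := by linarith
  calc ‖|a n| / (c + 2 * n + 2)‖ = |a n| / (c + 2 * n + 2) :=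
        Real.norm_of_nonneg (div_nonneg (abs_nonneg _) (by linarith))
    _ ≤ C * (n : ℝ) ^ (α - 2) / (2 * n) :=
        div_le_div₀ (le_trans (abs_nonneg _) (ha n hn)) (ha n hn) (by positivity) hden
    _ = C / 2 * (n : ℝ) ^ (α - 3) := by
        rw [show α - 2 = α - 3 + 1 by ring, Real.rpow_add_one (by positivity)]
        field_simp

theorem image_inv_Ioo_zero_one : (·⁻¹) '' Ioo (0 : ℝ) 1 = Ioi 1 := by
  rw [image_inv_eq_inv, inv_Ioo_0_left one_pos, inv_one]

section InversionChangeOfVariables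

variable {E : Type*} [NormedAddCommGroup E] [NormedSpace ℝ E]

theorem hasDerivWithinAt_inv_Ioo_zero_one {x : ℝ} (hx : x ∈ Ioo (0 : ℝ) 1) :
    HasDerivWithinAt (fun y ↦ y⁻¹) (-(x ^ 2)⁻¹) (Ioo 0 1) x :=
  (hasDerivAt_inv hx.1.ne').hasDerivWithinAt

theorem integrableOn_Ioi_one_iff_comp_inv (f : ℝ → E) :
    IntegrableOn f (Ioi 1) ↔ IntegrableOn (fun x ↦ (x ^ 2)⁻¹ • f x⁻¹) (Ioo 0 1) := by
  rw [← image_inv_Ioo_zero_one, integrableOn_image_iff_integrableOn_abs_deriv_smul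
    measurableSet_Ioo (fun _ ↦ hasDerivWithinAt_inv_Ioo_zero_one) inv_injective.injOn]
  refine integrableOn_congr_fun (fun x hx ↦ ?_) measurableSet_Ioo
  rw [abs_neg, abs_of_pos (inv_pos.2 (pow_pos hx.1 2))]

theorem integral_Ioi_one_eq_integral_comp_inv (f : ℝ → E) :
    ∫ x in Ioi 1, f x = ∫ x in Ioo 0 1, (x ^ 2)⁻¹ • f x⁻¹ := by
  rw [← image_inv_Ioo_zero_one, integral_image_eq_integral_abs_deriv_smul
    measurableSet_Ioo (fun _ ↦ hasDerivWithinAt_inv_Ioo_zero_one) inv_injective.injOn]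
  refine setIntegral_congr_fun measurableSet_Ioo (fun x hx ↦ ?_)
  rw [abs_neg, abs_of_pos (inv_pos.2 (pow_pos hx.1 2))]

end InversionChangeOfVariables

section Scaling

variable {g : ℝ → ℝ} {β : ℝ} (hscal : ∀ r : ℝ, 0 < r → g (1 / r) = r ^ β * g r) (s : ℂ)
include hscal

theorem inv_sq_smul_cpow_mul_comp_inv {x : ℝ} (hx : 0 < x) :
    (x ^ 2)⁻¹ • (((x⁻¹ : ℝ) : ℂ) ^ s * (g x⁻¹ : ℂ)) = (x : ℂ) ^ (β - 2 - s) * (g x : ℂ) := by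
  have hx' : (x : ℂ) ≠ 0 := ofReal_ne_zero.2 hx.ne'
  have hinv : ((x⁻¹ : ℝ) : ℂ) ^ s = (x : ℂ) ^ (-s) := by
    rw [ofReal_inv, inv_cpow _ _ (by rw [arg_ofReal_of_nonneg hx.le]; exact pi_ne_zero.symm),
      cpow_neg]
  have hscal' : g x⁻¹ = x ^ β * g x := by rw [← one_div, hscal x hx]
  rw [hscal', real_smul, hinv, ofReal_mul, ofReal_cpow hx.le, ofReal_inv, ofReal_pow,
    show (β : ℂ) - 2 - s = β + -2 + -s by ring, cpow_add _ _ hx', cpow_add _ _ hx']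
  simp only [cpow_neg, cpow_ofNat]
  ring

theorem integrableOn_Ioi_one_cpow_mul_iff :
    IntegrableOn (fun r : ℝ ↦ (r : ℂ) ^ s * (g r : ℂ)) (Ioi 1) ↔
      IntegrableOn (fun r : ℝ ↦ (r : ℂ) ^ (β - 2 - s) * (g r : ℂ)) (Ioo 0 1) := by
  rw [integrableOn_Ioi_one_iff_comp_inv]
  exact integrableOn_congr_fun (fun x hx ↦ inv_sq_smul_cpow_mul_comp_inv hscal s hx.1)
    measurableSet_Ioo

theorem integral_Ioi_one_cpow_mul :
    ∫ r in Ioi (1 : ℝ), (r : ℂ) ^ s * (g r : ℂ) =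
      ∫ r in Ioo (0 : ℝ) 1, (r : ℂ) ^ (β - 2 - s) * (g r : ℂ) := by
  rw [integral_Ioi_one_eq_integral_comp_inv]
  exact setIntegral_congr_fun measurableSet_Ioo fun x hx ↦
    inv_sq_smul_cpow_mul_comp_inv hscal s hx.1

end Scaling

theorem integrableOn_Ioi_zero_and_integral_eq_add {E : Type*} [NormedAddCommGroup E]
    [NormedSpace ℝ E] {f : ℝ → E} (h₀ : IntegrableOn f (Ioo 0 1)) (h₁ : IntegrableOn f (Ioi 1)) :
    IntegrableOn f (Ioi 0) ∧ ∫ x in Ioi 0, f x = (∫ x in Ioo 0 1, f x) + ∫ x in Ioi 1, f x := by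
  rw [← integrableOn_Ioc_iff_integrableOn_Ioo] at h₀
  rw [← Ioc_union_Ioi_eq_Ioi zero_le_one, ← integral_Ioc_eq_integral_Ioo]
  exact ⟨h₀.union h₁, setIntegral_union (Ioc_disjoint_Ioi le_rfl) measurableSet_Ioi h₀ h₁⟩

theorem stmt_12_general (d : ℕ) (α δ : ℝ) (hα2 : α < 2)
    (hδ1 : -α < δ) (hδ2 : δ < α)
    (g : ℝ → ℝ) (a : ℕ → ℝ) (C : ℝ)
    (hapos : ∀ n, 0 < a n)
    (habd : ∀ n : ℕ, 1 ≤ n → a n ≤ C * (n : ℝ) ^ (α - 2))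
    (hg : ∀ r ∈ Set.Ioo (-1 : ℝ) 1, g r = ∑' n : ℕ, a n * r ^ (2 * n + 1))
    (hscal : ∀ r : ℝ, 0 < r → g (1 / r) = r ^ ((d : ℝ) - 2 + α) * g r)
    (lam : ℝ) :
    MeasureTheory.IntegrableOn
      (fun r : ℝ => (r : ℂ) ^ (Complex.I * lam - 2 + (α : ℂ) / 2 - (δ : ℂ) / 2) * (g r : ℂ))
      (Set.Ioi (0 : ℝ)) ∧
    (∫ r in Set.Ioi (0 : ℝ),
        (r : ℂ) ^ (Complex.I * lam - 2 + (α : ℂ) / 2 - (δ : ℂ) / 2) * (g r : ℂ))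
      = ∑' n : ℕ, (a n : ℂ) *
          (1 / (Complex.I * lam + 2 * n + (α : ℂ) / 2 - (δ : ℂ) / 2) +
           1 / (-(Complex.I * lam) + d + 2 * n + (α : ℂ) / 2 + (δ : ℂ) / 2)) := by
  set s : ℂ := I * lam - 2 + α / 2 - δ / 2
  set s' : ℂ := ((d - 2 + α : ℝ) : ℂ) - 2 - s
  have hs_re : s.re = -2 + α / 2 - δ / 2 := by simp [s]
  have hs'_re : s'.re = d - 2 + α / 2 + δ / 2 := by simp [s', hs_re]; ring
  have hs : -2 < s.re := by linarith
  have hs' : -2 < s'.re := by linarith [d.cast_nonneg (α := ℝ)]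
  have hg₀ (r : ℝ) (hr : r ∈ Ioo 0 1) := hg r ⟨by linarith [hr.1], hr.2⟩
  have habd' (n : ℕ) (hn : 1 ≤ n) := (abs_of_pos (hapos n)).trans_le (habd n hn)
  obtain ⟨hint₀, hsum₀⟩ := hasSum_integral_cpow_mul_odd_powerSeries hs hg₀
    (summable_abs_div_of_abs_le_rpow hα2 hs habd')
  obtain ⟨hint₁, hsum₁⟩ := hasSum_integral_cpow_mul_odd_powerSeries hs' hg₀
    (summable_abs_div_of_abs_le_rpow hα2 hs' habd')
  obtain ⟨hint, hsplit⟩ := integrableOn_Ioi_zero_and_integral_eq_add hint₀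
    ((integrableOn_Ioi_one_cpow_mul_iff hscal s).2 hint₁)
  refine ⟨hint, ?_⟩
  rw [hsplit, integral_Ioi_one_cpow_mul hscal, ← (hsum₀.add hsum₁).tsum_eq]
  refine tsum_congr fun n ↦ ?_
  rw [show s + 2 * n + 2 = I * lam + 2 * n + α / 2 - δ / 2 by ring,
    show s' + 2 * n + 2 = -(I * lam) + d + 2 * n + α / 2 + δ / 2 by
      simp only [s', s]; push_cast; ring]
  ring

/-- Mellin transform of the kernel: absolute convergence and series formula. -/
theorem stmt_12 (d : ℕ) (hd : 1 ≤ d) (α δ : ℝ) (hα0 : 0 < α) (hα2 : α < 2)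
    (hδ1 : -α < δ) (hδ2 : δ < α)
    (g : ℝ → ℝ) (a : ℕ → ℝ) (C : ℝ)
    (hapos : ∀ n, 0 < a n)
    (habd : ∀ n : ℕ, 1 ≤ n → a n ≤ C * (n : ℝ) ^ (α - 2))
    (hg : ∀ r ∈ Set.Ioo (-1 : ℝ) 1, g r = ∑' n : ℕ, a n * r ^ (2 * n + 1))
    (hscal : ∀ r : ℝ, 0 < r → g (1 / r) = r ^ ((d : ℝ) - 2 + α) * g r)
    (lam : ℝ) :
    MeasureTheory.IntegrableOn
      (fun r : ℝ => (r : ℂ) ^ (Complex.I * lam - 2 + (α : ℂ) / 2 - (δ : ℂ) / 2) * (g r : ℂ))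
      (Set.Ioi (0 : ℝ)) ∧
    (∫ r in Set.Ioi (0 : ℝ),
        (r : ℂ) ^ (Complex.I * lam - 2 + (α : ℂ) / 2 - (δ : ℂ) / 2) * (g r : ℂ))
      = ∑' n : ℕ, (a n : ℂ) *
          (1 / (Complex.I * lam + 2 * n + (α : ℂ) / 2 - (δ : ℂ) / 2) +
           1 / (-(Complex.I * lam) + d + 2 * n + (α : ℂ) / 2 + (δ : ℂ) / 2)) :=
  stmt_12_general d α δ hα2 hδ1 hδ2 g a C hapos habd hg hscal lam
end
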